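/- arXiv:math/0207106 — 7 statements merged into one kernel-verified Lean document; each statement's English description precedes it below -/
import Mathlib

section
/- For n \ge 1 and any integer i with 0 < i, the identity (i+1) \binom{n-1}{i} Z^{n-i-1} = \sum_{\emptyset \ne I \subsetneq \{1,...,n\}} \binom{|I|-1}{i-1} Z_I^{|I|-i} (Z - Z_I)^{n-|I|-1} holds as an identity of polynomials in z_1, ..., z_n, where Z = z_1 + ... + z_n and Z_I = \sum_{j \in I} z_j, and where negative powers do not occur since \binom{|I|-1}{i-1} = 0 when |I| < i. -/
/-!
Write `A_x(I) = x (x + z_I)^{|I|-1}`, with `A_x(∅) = 1`. Hurwitz's identity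
`∑_{I ⊆ s} A_x(I) (y + z_{s∖I})^{|s∖I|} = (x + y + z_s)^{|s|}` is proved by induction on `s`:
as polynomials in `y` both sides have the same derivative, by the induction hypothesis for the
sets `s ∖ {j}`, and both vanish at `y = -(x + z_s)`, where the left side becomes an `|s|`-fold
finite difference of a polynomial of degree `|s| - 1`. Splitting according to whether a fixed
`j ∈ s` lies in `I` gives the symmetric form `∑_I A_x(I) A_y(s∖I) = A_{x+y}(s)`.

The identity is the coefficient of `x^i y` of the symmetric form. On the left only proper nonempty
`I` contribute, each `C(|I|-1, i-1) z_I^{|I|-i} z_{s∖I}^{|s∖I|-1}`. On the right `A_{x+y}(s)` is a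
function of `x + y`, so the coefficient is `i + 1` times the coefficient of `t^{i+1}` in
`t (t + z_s)^{|s|-1}`.
-/

open Finset MvPolynomial

section

variable {α R : Type*} [DecidableEq α]

section CommRing

variable [CommRing R]

/-- The value `1` at `I = ∅` is formally `x · x⁻¹`. -/
def abelWeight (z : α → R) (x : R) (I : Finset α) : R :=
  if I = ∅ then 1 else x * (x + ∑ j ∈ I, z j) ^ (#I - 1)

@[simp]
lemma abelWeight_empty (z : α → R) (x : R) : abelWeight z x ∅ = 1 := if_pos rfl

lemma abelWeight_of_nonempty (z : α → R) (x : R) {I : Finset α} (hI : I.Nonempty) :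
    abelWeight z x I = x * (x + ∑ j ∈ I, z j) ^ (#I - 1) :=
  if_neg hI.ne_empty

lemma map_abelWeight {S : Type*} [CommRing S] (φ : R →+* S) (z : α → R) (x : R) (I : Finset α) :
    φ (abelWeight z x I) = abelWeight (φ ∘ z) (φ x) I := by
  unfold abelWeight
  split_ifs <;> simp

lemma abelWeight_of_mem (z : α → R) (x : R) {K : Finset α} {j : α} (hj : j ∈ K) :
    abelWeight z x K = x * (x + z j + ∑ a ∈ K.erase j, z a) ^ #(K.erase j) := by
  rw [abelWeight_of_nonempty z x ⟨j, hj⟩, add_assoc, add_sum_erase K z hj, card_erase_of_mem hj]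

lemma abelWeight_mul_pow (z : α → R) (x : R) (I : Finset α) {m : ℕ} (h : 0 < #I + m) :
    abelWeight z x I * (x + ∑ j ∈ I, z j) ^ m = x * (x + ∑ j ∈ I, z j) ^ (#I + m - 1) := by
  rcases I.eq_empty_or_nonempty with rfl | hI
  · obtain ⟨m, rfl⟩ := Nat.exists_eq_add_of_lt (by simpa using h)
    simp [pow_succ']
  · rw [abelWeight_of_nonempty z x hI, mul_assoc, ← pow_add]
    congr 2
    have := hI.card_pos
    omega

theorem sum_powerset_neg_one_pow_card_mul_pow_eq_zero (z : α → R) (w : R) {s : Finset α}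
    {k : ℕ} (hk : k < #s) :
    ∑ I ∈ s.powerset, (-1) ^ #I * (w + ∑ j ∈ I, z j) ^ k = 0 := by
  induction s using Finset.induction_on generalizing k with
  | empty => simp at hk
  | @insert a t ha ih =>
    rw [card_insert_of_notMem ha] at hk
    have hpair : ∀ I ∈ t.powerset,
        (-1) ^ #I * (w + ∑ j ∈ I, z j) ^ k
          + (-1) ^ #(insert a I) * (w + ∑ j ∈ insert a I, z j) ^ k
        = -∑ m ∈ range k, z a ^ (k - m) * k.choose m * ((-1) ^ #I * (w + ∑ j ∈ I, z j) ^ m) := by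
      intro I hI
      have haI : a ∉ I := fun h => ha (mem_powerset.1 hI h)
      rw [card_insert_of_notMem haI, sum_insert haI, add_left_comm]
      generalize w + ∑ j ∈ I, z j = u
      have hbinom : (z a + u) ^ k = ∑ m ∈ range k, z a ^ (k - m) * k.choose m * u ^ m + u ^ k := by
        rw [add_comm, add_pow, sum_range_succ]
        simp only [Nat.sub_self, pow_zero, Nat.choose_self, Nat.cast_one, mul_one]
        exact congrArg (· + u ^ k) (sum_congr rfl fun m _ => by ring)
      have hfactor : ∑ m ∈ range k, z a ^ (k - m) * k.choose m * ((-1) ^ #I * u ^ m)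
          = (-1) ^ #I * ∑ m ∈ range k, z a ^ (k - m) * k.choose m * u ^ m := by
        rw [mul_sum]
        exact sum_congr rfl fun _ _ => by ring
      rw [hbinom, hfactor]
      ring
    rw [sum_powerset_insert ha, ← sum_add_distrib, sum_congr rfl hpair, sum_neg_distrib, sum_comm]
    refine neg_eq_zero.2 (sum_eq_zero fun m hm => ?_)
    rw [← mul_sum, ih (by simp at hm; omega), mul_zero]

theorem sum_abelWeight_mul_neg_pow_eq_zero (z : α → R) (x : R) {s : Finset α} (hs : s.Nonempty) :
    ∑ I ∈ s.powerset, abelWeight z x I * (-(x + ∑ j ∈ I, z j)) ^ #(s \ I) = 0 := by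
  have hterm : ∀ I ∈ s.powerset, abelWeight z x I * (-(x + ∑ j ∈ I, z j)) ^ #(s \ I)
      = (-1) ^ #s * x * ((-1) ^ #I * (x + ∑ j ∈ I, z j) ^ (#s - 1)) := by
    intro I hI
    have hcard := card_sdiff_add_card_eq_card (mem_powerset.1 hI)
    have hsign : (-1 : R) ^ #(s \ I) = (-1) ^ #s * (-1) ^ #I := by
      rw [← hcard, pow_add, mul_assoc, ← pow_add, Even.neg_one_pow ⟨_, rfl⟩, mul_one]
    rw [neg_pow, mul_left_comm, abelWeight_mul_pow z x I (by have := hs.card_pos; omega),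
      add_comm #I, hcard, hsign]
    ring
  rw [sum_congr rfl hterm, ← mul_sum,
    sum_powerset_neg_one_pow_card_mul_pow_eq_zero z x (Nat.sub_lt hs.card_pos one_pos), mul_zero]

end CommRing

namespace Polynomial

variable [CommRing R]

instance [IsAddTorsionFree R] : IsAddTorsionFree R[X] :=
  ⟨fun _ hn _ _ h => ext fun k => nsmul_right_injective hn (by simpa using congrArg (coeff · k) h)⟩

theorem eq_of_derivative_eq_of_eval_eq [IsAddTorsionFree R] {p q : R[X]}
    (h : derivative p = derivative q) (r : R) (hr : p.eval r = q.eval r) : p = q := by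
  have hC := eq_C_of_derivative_eq_zero (p := p - q) (by rw [derivative_sub, h, sub_self])
  have hcoeff : (p - q).coeff 0 = 0 := by simpa [hr] using (congrArg (eval r) hC).symm
  rw [← sub_eq_zero, hC, hcoeff, C_0]

lemma derivative_taylor (r : R) (p : R[X]) : derivative (taylor r p) = taylor r (derivative p) := by
  simp [taylor_apply, derivative_comp]

lemma derivative_X_add_C_sum_pow (z : α → R) (K : Finset α) :
    derivative ((X + C (∑ j ∈ K, z j)) ^ #K)
      = ∑ j ∈ K, taylor (z j) ((X + C (∑ a ∈ K.erase j, z a)) ^ #(K.erase j)) := by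
  have hterm : ∀ j ∈ K, taylor (z j) ((X + C (∑ a ∈ K.erase j, z a)) ^ #(K.erase j))
      = (X + C (∑ j ∈ K, z j)) ^ (#K - 1) := by
    intro j hj
    rw [taylor_pow, map_add, taylor_X, taylor_C, add_assoc, ← C_add, add_sum_erase K z hj,
      card_erase_of_mem hj]
  rw [sum_congr rfl hterm, sum_const, derivative_X_add_C_pow, nsmul_eq_mul, C_eq_natCast]

lemma coeff_abelWeight_X_succ (z : α → R) {K : Finset α} (hK : K.Nonempty) (i : ℕ) :
    (abelWeight (C ∘ z) X K).coeff (i + 1) = (#K - 1).choose i * (∑ j ∈ K, z j) ^ (#K - 1 - i) := by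
  simp only [abelWeight_of_nonempty _ _ hK, coeff_X_mul, Function.comp_apply, ← map_sum,
    coeff_X_add_C_pow, mul_comm]

lemma coeff_abelWeight_X_one (z : α → R) {K : Finset α} (hK : K.Nonempty) :
    (abelWeight (C ∘ z) X K).coeff 1 = (∑ j ∈ K, z j) ^ (#K - 1) := by
  simpa using coeff_abelWeight_X_succ z hK 0

theorem sum_C_abelWeight_mul_X_add_C_sum_pow [IsAddTorsionFree R] (z : α → R) (x : R)
    (s : Finset α) :
    ∑ I ∈ s.powerset, C (abelWeight z x I) * (X + C (∑ j ∈ s \ I, z j)) ^ #(s \ I)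
      = taylor x ((X + C (∑ j ∈ s, z j)) ^ #s) := by
  induction s using Finset.strongInduction with
  | H s ih =>
  rcases s.eq_empty_or_nonempty with rfl | hs
  · simp
  refine eq_of_derivative_eq_of_eval_eq ?_ (-(x + ∑ j ∈ s, z j)) ?_
  · calc _ = ∑ I ∈ s.powerset, ∑ j ∈ s \ I, C (abelWeight z x I)
            * taylor (z j) ((X + C (∑ a ∈ s.erase j \ I, z a)) ^ #(s.erase j \ I)) := by
          simp only [derivative_sum, derivative_C_mul, derivative_X_add_C_sum_pow, mul_sum,
            erase_sdiff_comm]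
      _ = ∑ j ∈ s, ∑ I ∈ (s.erase j).powerset, C (abelWeight z x I)
            * taylor (z j) ((X + C (∑ a ∈ s.erase j \ I, z a)) ^ #(s.erase j \ I)) :=
          sum_comm' fun I j => by simp only [mem_powerset, mem_sdiff, subset_erase]; tauto
      _ = ∑ j ∈ s, taylor (z j) (taylor x ((X + C (∑ a ∈ s.erase j, z a)) ^ #(s.erase j))) := by
          refine sum_congr rfl fun j hj => ?_
          rw [← ih _ (erase_ssubset hj), map_sum]
          simp only [taylor_mul, taylor_C]
      _ = taylor x (derivative ((X + C (∑ j ∈ s, z j)) ^ #s)) := by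
          rw [derivative_X_add_C_sum_pow, map_sum]
          simp only [taylor_taylor, add_comm]
      _ = _ := (derivative_taylor _ _).symm
  · have hshift : ∀ I ∈ s.powerset,
        -(x + ∑ j ∈ s, z j) + ∑ j ∈ s \ I, z j = -(x + ∑ j ∈ I, z j) := by
      intro I hI
      rw [← sum_sdiff (mem_powerset.1 hI)]
      ring
    simp only [taylor_eval, eval_finsetSum, eval_mul, eval_C, eval_pow, eval_add, eval_X]
    rw [sum_congr rfl fun I hI => by rw [hshift I hI], sum_abelWeight_mul_neg_pow_eq_zero z x hs,
      add_assoc, neg_add_cancel, zero_pow hs.card_pos.ne']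

end Polynomial

section Hurwitz

variable [CommRing R] [IsAddTorsionFree R]

theorem sum_abelWeight_mul_add_sum_sdiff_pow (z : α → R) (x y : R) (s : Finset α) :
    ∑ I ∈ s.powerset, abelWeight z x I * (y + ∑ j ∈ s \ I, z j) ^ #(s \ I)
      = (x + y + ∑ j ∈ s, z j) ^ #s := by
  have h := congrArg (Polynomial.eval y) (Polynomial.sum_C_abelWeight_mul_X_add_C_sum_pow z x s)
  simp only [Polynomial.taylor_eval, Polynomial.eval_finsetSum, Polynomial.eval_mul,
    Polynomial.eval_C, Polynomial.eval_pow, Polynomial.eval_add, Polynomial.eval_X] at h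
  rw [h, add_comm x y]

theorem sum_filter_notMem_abelWeight_mul_abelWeight_sdiff (z : α → R) (x y : R) {s : Finset α}
    {j : α} (hj : j ∈ s) :
    ∑ I ∈ s.powerset with j ∉ I, abelWeight z x I * abelWeight z y (s \ I)
      = y * (x + y + ∑ a ∈ s, z a) ^ (#s - 1) := by
  have hfilter : {I ∈ s.powerset | j ∉ I} = (s.erase j).powerset := by
    ext I
    simp only [mem_filter, mem_powerset, subset_erase]
  have hterm : ∀ I ∈ (s.erase j).powerset, abelWeight z x I * abelWeight z y (s \ I)
      = y * (abelWeight z x I * (y + z j + ∑ a ∈ s.erase j \ I, z a) ^ #(s.erase j \ I)) := by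
    intro I hI
    have hjI : j ∉ I := fun h => notMem_erase j s (mem_powerset.1 hI h)
    rw [abelWeight_of_mem z y (mem_sdiff.2 ⟨hj, hjI⟩), erase_sdiff_comm]
    ring
  rw [hfilter, sum_congr rfl hterm, ← mul_sum, sum_abelWeight_mul_add_sum_sdiff_pow,
    card_erase_of_mem hj, add_assoc x, add_assoc y, add_sum_erase s z hj, ← add_assoc]

theorem sum_abelWeight_mul_abelWeight_sdiff (z : α → R) (x y : R) (s : Finset α) :
    ∑ I ∈ s.powerset, abelWeight z x I * abelWeight z y (s \ I) = abelWeight z (x + y) s := by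
  rcases s.eq_empty_or_nonempty with rfl | ⟨j, hj⟩
  · simp
  have hcompl : ∑ I ∈ s.powerset with ¬j ∉ I, abelWeight z x I * abelWeight z y (s \ I)
      = ∑ K ∈ s.powerset with j ∉ K, abelWeight z y K * abelWeight z x (s \ K) := by
    refine sum_nbij' (s \ ·) (s \ ·) ?_ ?_ ?_ ?_ ?_ <;>
      simp +contextual [mul_comm, hj]
  rw [← sum_filter_add_sum_filter_not s.powerset (fun I => j ∉ I), hcompl,
    sum_filter_notMem_abelWeight_mul_abelWeight_sdiff z x y hj,
    sum_filter_notMem_abelWeight_mul_abelWeight_sdiff z y x hj, abelWeight_of_nonempty z _ ⟨j, hj⟩]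
  ring

end Hurwitz

namespace Polynomial

variable [CommRing R]

-- The coefficient of `y` in `sum_abelWeight_mul_abelWeight_sdiff` for `x = C X`, `y = X`
-- in `R[X][X]`.
theorem sum_abelWeight_mul_C_coeff_one [IsAddTorsionFree R] (z : α → R) (s : Finset α) :
    ∑ I ∈ s.powerset, abelWeight (C ∘ z) X I * C ((abelWeight (C ∘ z) X (s \ I)).coeff 1)
      = derivative (abelWeight (C ∘ z) X s) := by
  have hx : ∀ I, abelWeight (C ∘ C ∘ z) (C X) I = C (abelWeight (C ∘ z) X I) :=
    fun I => (map_abelWeight C _ _ _).symm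
  have hy : ∀ K, abelWeight (C ∘ C ∘ z) X K = (abelWeight (C ∘ z) X K).map C := by
    intro K
    rw [← coe_mapRingHom, map_abelWeight, coe_mapRingHom, map_X]
    congr 1
    funext j
    exact (map_C _).symm
  have hxy : abelWeight (C ∘ C ∘ z) (C X + X) s = taylor X ((abelWeight (C ∘ z) X s).map C) := by
    have h := map_abelWeight (taylorAlgHom (X : R[X])).toRingHom (C ∘ C ∘ z) X s
    simp only [AlgHom.toRingHom_eq_coe, RingHom.coe_coe, taylorAlgHom_apply, taylor_X] at h
    rw [← hy, h, add_comm]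
    congr 1
    funext j
    exact (taylor_C _ _).symm
  have h := congrArg (coeff · 1) (sum_abelWeight_mul_abelWeight_sdiff (C ∘ C ∘ z) (C X) X s)
  simp only [hx, hy, hxy, finsetSum_coeff, coeff_C_mul, coeff_map, taylor_coeff_one,
    derivative_map, eval_map, eval₂_C_X] at h
  exact h

end Polynomial

theorem sum_choose_mul_pow_mul_pow [CommRing R] [IsAddTorsionFree R] (z : α → R) (s : Finset α)
    {i : ℕ} (hi : 0 < i) :
    ∑ I ∈ s.powerset with I ≠ ∅ ∧ I ≠ s, ((#I - 1).choose (i - 1) : R) * (∑ j ∈ I, z j) ^ (#I - i)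
        * (∑ j ∈ s \ I, z j) ^ (#(s \ I) - 1)
      = (((i + 1) * (#s - 1).choose i : ℕ) : R) * (∑ j ∈ s, z j) ^ (#s - i - 1) := by
  obtain ⟨i, rfl⟩ : ∃ k, i = k + 1 := ⟨i - 1, by omega⟩
  rcases s.eq_empty_or_nonempty with rfl | hs
  · simp [filter_singleton]
  have h := congrArg (Polynomial.coeff · (i + 1)) (Polynomial.sum_abelWeight_mul_C_coeff_one z s)
  simp only [Polynomial.finsetSum_coeff, Polynomial.coeff_mul_C, Polynomial.coeff_derivative,
    Polynomial.coeff_abelWeight_X_succ _ hs] at h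
  rw [← sum_filter_of_ne (p := fun I => I ≠ ∅ ∧ I ≠ s) ?_] at h
  · have hterm : ∀ I ∈ {I ∈ s.powerset | I ≠ ∅ ∧ I ≠ s},
        (abelWeight (Polynomial.C ∘ z) Polynomial.X I).coeff (i + 1)
            * (abelWeight (Polynomial.C ∘ z) Polynomial.X (s \ I)).coeff 1
          = ((#I - 1).choose i : R) * (∑ j ∈ I, z j) ^ (#I - (i + 1))
            * (∑ j ∈ s \ I, z j) ^ (#(s \ I) - 1) := by
      intro I hI
      obtain ⟨hsub, hne, hne_s⟩ := by simpa only [mem_filter, mem_powerset] using hI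
      have hcompl : (s \ I).Nonempty := sdiff_nonempty.2 fun h => hne_s (Subset.antisymm hsub h)
      rw [Polynomial.coeff_abelWeight_X_succ z (nonempty_iff_ne_empty.2 hne),
        Polynomial.coeff_abelWeight_X_one z hcompl, Nat.sub_sub, add_comm 1]
    rw [sum_congr rfl hterm] at h
    rw [Nat.add_sub_cancel, h, Nat.sub_right_comm]
    push_cast
    ring
  · intro I _ hne
    constructor <;> rintro rfl <;> simp [Polynomial.coeff_one] at hne

end

theorem lqpp_identity_general (n : ℕ) (i : ℕ) (hi : 0 < i) :
    (((i + 1) * Nat.choose (n - 1) i : ℕ) : MvPolynomial (Fin n) ℚ) *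
        (∑ j, X j) ^ (n - i - 1) =
      ∑ I ∈ Finset.univ.powerset.filter (fun I : Finset (Fin n) => I ≠ ∅ ∧ I ≠ Finset.univ),
        ((Nat.choose (I.card - 1) (i - 1) : ℕ) : MvPolynomial (Fin n) ℚ) *
          (∑ j ∈ I, X j) ^ (I.card - i) *
          ((∑ j, X j) - ∑ j ∈ I, X j) ^ (n - I.card - 1) := by
  have h := sum_choose_mul_pow_mul_pow (fun j : Fin n => (X j : MvPolynomial (Fin n) ℚ)) univ hi
  simp only [card_univ, Fintype.card_fin, card_univ_sdiff, sum_sdiff_eq_sub (subset_univ _)] at h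
  exact h.symm

/-- Equation (lqpp) of Getzler–Okounkov–Pandharipande: for `n ≥ 1` and `i ≥ 1`,
`(i+1) C(n-1,i) Z^{n-i-1} = ∑_{∅ ≠ I ⊊ {1,…,n}} C(|I|-1,i-1) Z_I^{|I|-i} (Z-Z_I)^{n-|I|-1}`
as polynomials in `z_1, …, z_n` over `ℚ`. -/
theorem lqpp_identity (n : ℕ) (hn : 1 ≤ n) (i : ℕ) (hi : 0 < i) :
    (((i + 1) * Nat.choose (n - 1) i : ℕ) : MvPolynomial (Fin n) ℚ) *
        (∑ j, X j) ^ (n - i - 1) =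
      ∑ I ∈ Finset.univ.powerset.filter (fun I : Finset (Fin n) => I ≠ ∅ ∧ I ≠ Finset.univ),
        ((Nat.choose (I.card - 1) (i - 1) : ℕ) : MvPolynomial (Fin n) ℚ) *
          (∑ j ∈ I, X j) ^ (I.card - i) *
          ((∑ j, X j) - ∑ j ∈ I, X j) ^ (n - I.card - 1) :=
  lqpp_identity_general n i hi
end

section
/- For n \ge 1 and integer i \ge 1, and for each fixed k \in \{1,...,n\}, the identity i \binom{n-1}{i} Z^{n-i-1} = \sum_{\substack{I: k \in I, I \ne \{1,...,n\}}} \binom{|I|-1}{i-1} Z_I^{|I|-i} (Z-Z_I)^{n-|I|-1} holds as an identity of polynomials in z_1,...,z_n, where the sum is over proper subsets I of \{1,...,n\} containing k. -/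
/-!
Put `T = {1,…,n} ∖ {k}`, `x = z_k`, `s = i - 1` and `I = J ∪ {k}`. The right-hand side becomes
`A(T, x, s) = ∑_{J ⊊ T} C(|J|,s) (x + Z_J)^(|J|-s) (Z_T - Z_J)^(|T|-|J|-1)` (`A = abelSum z`),
and `A(T, x, s) = |T| C(|T|-1,s) (x + Z_T)^(|T|-1-s)` holds for any family `z` in a torsion-free
commutative ring, by strong induction on `T`. Distributing the factor `|J|`, resp. `Z_J`, over the
elements `k ∈ J` gives
  `(s+1) A(T, x, s+1) = ∑_{k ∈ T} A(T ∖ k, x + z_k, s)`,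
  `A(T, 0, 0) = Z_T^(|T|-1) + ∑_{k ∈ T} z_k A(T ∖ k, z_k, 0)`,
which settle `s ≥ 1` and `(x, s) = (0, 0)`; the binomial theorem in `x`,
`A(T, x, 0) = ∑_s x^s A(T, 0, s)`, settles the remaining case `s = 0`.
-/

open Finset MvPolynomial

theorem Nat.add_one_mul_choose_add_one (n s : ℕ) :
    (s + 1) * n.choose (s + 1) = n * (n - 1).choose s := by
  cases n with
  | zero => simp
  | succ n => rw [Nat.add_sub_cancel, Nat.add_one_mul_choose_eq, mul_comm]

section

variable {σ R : Type*} [DecidableEq σ] [CommRing R] (z : σ → R)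

def abelSum (T : Finset σ) (x : R) (s : ℕ) : R :=
  ∑ J ∈ T.ssubsets, (J.card.choose s : R) * (x + ∑ j ∈ J, z j) ^ (J.card - s) *
    (∑ j ∈ T, z j - ∑ j ∈ J, z j) ^ (T.card - J.card - 1)

theorem sum_ssubsets_mem_eq_abelSum_erase {S : Finset σ} {k : σ} (hk : k ∈ S) (x : R)
    (s : ℕ) :
    ∑ I ∈ S.ssubsets.filter (k ∈ ·), ((I.card - 1).choose s : R) *
        (x + ∑ j ∈ I, z j) ^ (I.card - 1 - s) *
        (∑ j ∈ S, z j - ∑ j ∈ I, z j) ^ (S.card - I.card - 1) =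
      abelSum z (S.erase k) (x + z k) s := by
  have hkJ {J : Finset σ} (hJ : J ⊂ S.erase k) : k ∉ J := fun h => by simpa using hJ.subset h
  refine (sum_nbij' (insert k) (·.erase k) ?_ ?_ ?_ ?_ ?_).symm
  · intro J hJ
    rw [mem_ssubsets] at hJ
    simp only [mem_filter, mem_ssubsets, mem_insert_self, and_true]
    grind
  · intro I hI
    simp only [mem_filter, mem_ssubsets] at hI ⊢
    grind [insert_erase]
  · intro J hJ
    exact erase_insert (hkJ (mem_ssubsets.1 hJ))
  · intro I hI
    exact insert_erase (mem_filter.1 hI).2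
  · intro J hJ
    have hkJ := hkJ (mem_ssubsets.1 hJ)
    rw [card_insert_of_notMem hkJ, sum_insert hkJ, ← add_sum_erase S z hk, card_erase_of_mem hk,
      Nat.add_sub_cancel, add_assoc, add_sub_add_left_eq_sub]
    congr 2
    have := card_pos.2 ⟨k, hk⟩
    omega

theorem sum_ssubsets_sum_mul_eq_sum_mul_abelSum_erase (w : σ → R) (T : Finset σ) (x : R)
    (s : ℕ) :
    ∑ I ∈ T.ssubsets, (∑ k ∈ I, w k) * (((I.card - 1).choose s : R) *
        (x + ∑ j ∈ I, z j) ^ (I.card - 1 - s) *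
        (∑ j ∈ T, z j - ∑ j ∈ I, z j) ^ (T.card - I.card - 1)) =
      ∑ k ∈ T, w k * abelSum z (T.erase k) (x + z k) s := by
  simp_rw [sum_mul]
  rw [sum_comm' (t' := T) (s' := fun k => T.ssubsets.filter (k ∈ ·))]
  · refine sum_congr rfl fun k hk => ?_
    rw [← mul_sum, sum_ssubsets_mem_eq_abelSum_erase z hk]
  · intro I k
    simp only [mem_filter, mem_ssubsets]
    exact ⟨fun h => ⟨⟨h.1, h.2⟩, h.1.subset h.2⟩, fun h => h.1⟩

theorem succ_mul_abelSum_succ (T : Finset σ) (x : R) (s : ℕ) :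
    ((s + 1 : ℕ) : R) * abelSum z T x (s + 1) =
      ∑ k ∈ T, abelSum z (T.erase k) (x + z k) s := by
  have h := sum_ssubsets_sum_mul_eq_sum_mul_abelSum_erase z 1 T x s
  simp only [Pi.one_apply, sum_const, nsmul_one, one_mul] at h
  rw [← h, abelSum, mul_sum]
  refine sum_congr rfl fun I _ => ?_
  simp only [show I.card - 1 - s = I.card - (s + 1) by omega, ← mul_assoc, ← Nat.cast_mul,
    Nat.add_one_mul_choose_add_one]

theorem abelSum_zero_zero_eq_of_erase {T : Finset σ}
    (h : ∀ k ∈ T, abelSum z (T.erase k) (z k) 0 =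
      (T.card - 1 : ℕ) * (∑ j ∈ T, z j) ^ (T.card - 2)) :
    abelSum z T 0 0 = T.card * (∑ j ∈ T, z j) ^ (T.card - 1) := by
  rcases T.eq_empty_or_nonempty with rfl | hT
  · simp [abelSum, ssubsets]
  set Z := ∑ j ∈ T, z j
  obtain ⟨m, hm⟩ : ∃ m, T.card = m + 1 := Nat.exists_eq_add_one.2 (card_pos.2 hT)
  have hsplit := sum_ssubsets_sum_mul_eq_sum_mul_abelSum_erase z z T 0 0
  simp only [zero_add, Nat.choose_zero_right, Nat.cast_one, one_mul, Nat.sub_zero] at hsplit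
  calc abelSum z T 0 0
      = Z ^ (T.card - 1) + ∑ I ∈ T.ssubsets, (∑ k ∈ I, z k) *
          ((∑ j ∈ I, z j) ^ (I.card - 1) * (Z - ∑ j ∈ I, z j) ^ (T.card - I.card - 1)) := by
        rw [abelSum, ← add_sum_erase _ _ (empty_mem_ssubsets hT),
          ← sum_erase T.ssubsets (a := ∅) (by simp)]
        congr 1
        · simp [Z]
        · refine sum_congr rfl fun I hI => ?_
          have hI : I.card ≠ 0 := card_ne_zero.2 (nonempty_iff_ne_empty.2 (ne_of_mem_erase hI))
          simp only [Nat.choose_zero_right, Nat.cast_one, one_mul, zero_add, Nat.sub_zero]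
          rw [← mul_pow_sub_one hI, mul_assoc]
    _ = Z ^ m + Z * (m * Z ^ (m - 1)) := by
        rw [hsplit, sum_mul, hm, Nat.add_sub_cancel]
        exact congrArg _ (sum_congr rfl fun k hk => by simp [h k hk, hm])
    _ = (m + 1 : ℕ) * Z ^ m := by
        rcases m with _ | m
        · simp [Z]
        · push_cast
          ring
    _ = T.card * Z ^ (T.card - 1) := by rw [hm, Nat.add_sub_cancel]

theorem abelSum_add_zero (T : Finset σ) (x y : R) :
    abelSum z T (x + y) 0 = ∑ s ∈ range T.card, x ^ s * abelSum z T y s := by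
  simp only [abelSum, mul_sum]
  rw [sum_comm]
  refine sum_congr rfl fun J hJ => ?_
  have hJT : J.card + 1 ≤ T.card := card_lt_card (mem_ssubsets.1 hJ)
  rw [← sum_subset (range_subset_range.2 hJT) fun s _ hs => ?_]
  · rw [Nat.choose_zero_right, Nat.cast_one, one_mul, Nat.sub_zero, add_assoc, add_pow, sum_mul]
    refine sum_congr rfl fun s _ => ?_
    ring
  · rw [mem_range, not_lt] at hs
    rw [Nat.choose_eq_zero_of_lt hs, Nat.cast_zero, zero_mul, zero_mul, mul_zero]

theorem abelSum_eq [IsAddTorsionFree R] (T : Finset σ) (x : R) (s : ℕ) :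
    abelSum z T x s =
      (T.card * (T.card - 1).choose s : ℕ) * (x + ∑ j ∈ T, z j) ^ (T.card - 1 - s) := by
  induction T using Finset.strongInduction generalizing x s with
  | H T ih =>
  set Z := ∑ j ∈ T, z j
  have ih_erase (k) (hk : k ∈ T) (x s) : abelSum z (T.erase k) (x + z k) s =
      ((T.card - 1) * (T.card - 1 - 1).choose s : ℕ) * (x + Z) ^ (T.card - 1 - 1 - s) := by
    rw [ih _ (erase_ssubset hk), card_erase_of_mem hk, add_assoc, add_sum_erase _ _ hk]
  have eq_succ (x s) : abelSum z T x (s + 1) =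
      (T.card * (T.card - 1).choose (s + 1) : ℕ) * (x + Z) ^ (T.card - 1 - (s + 1)) := by
    apply nsmul_right_injective s.add_one_ne_zero
    simp only [nsmul_eq_mul]
    rw [succ_mul_abelSum_succ, sum_congr rfl fun k hk => ih_erase k hk x s, sum_const,
      nsmul_eq_mul, ← Nat.add_one_mul_choose_add_one, Nat.sub_sub _ 1 s, add_comm 1 s]
    push_cast
    ring
  have eq_zero_zero : abelSum z T 0 0 = T.card * Z ^ (T.card - 1) :=
    abelSum_zero_zero_eq_of_erase z fun k hk => by simpa [Nat.sub_sub] using ih_erase k hk 0 0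
  rcases s with _ | s
  · have at_zero (s) :
        abelSum z T 0 s = (T.card * (T.card - 1).choose s : ℕ) * Z ^ (T.card - 1 - s) := by
      rcases s with _ | s
      · simp [eq_zero_zero]
      · rw [eq_succ, zero_add]
    rw [← add_zero x, abelSum_add_zero, sum_congr rfl fun s _ => by rw [at_zero], add_zero]
    generalize T.card = N
    rcases N with _ | m
    · simp
    · simp only [Nat.add_sub_cancel, Nat.sub_zero, Nat.choose_zero_right, mul_one, add_pow,
        mul_sum]
      refine sum_congr rfl fun s _ => ?_
      push_cast
      ring
  · exact eq_succ x s

end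

theorem lqppp_identity_general (n : ℕ) (i : ℕ) (hi : 1 ≤ i) (k : Fin n) :
    ((i * Nat.choose (n - 1) i : ℕ) : MvPolynomial (Fin n) ℚ) *
        (∑ j, X j) ^ (n - i - 1) =
      ∑ I ∈ Finset.univ.powerset.filter (fun I : Finset (Fin n) => k ∈ I ∧ I ≠ Finset.univ),
        ((Nat.choose (I.card - 1) (i - 1) : ℕ) : MvPolynomial (Fin n) ℚ) *
          (∑ j ∈ I, X j) ^ (I.card - i) *
          ((∑ j, X j) - ∑ j ∈ I, X j) ^ (n - I.card - 1) := by
  obtain ⟨s, rfl⟩ : ∃ s, i = s + 1 := ⟨i - 1, by omega⟩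
  have h := (sum_ssubsets_mem_eq_abelSum_erase (X : Fin n → MvPolynomial (Fin n) ℚ)
    (mem_univ k) 0 s).trans (abelSum_eq _ _ _ _)
  have hI (I : Finset (Fin n)) : I.card - 1 - s = I.card - (s + 1) := by omega
  rw [zero_add, add_sum_erase _ _ (mem_univ k), card_erase_of_mem (mem_univ k), card_univ,
    Fintype.card_fin, show n - 1 - 1 - s = n - (s + 1) - 1 by omega] at h
  simp only [zero_add, hI] at h
  have hfilter : univ.powerset.filter (fun I : Finset (Fin n) => k ∈ I ∧ I ≠ univ) =
      univ.ssubsets.filter (k ∈ ·) := by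
    ext I
    simp [ssubset_iff_subset_ne, and_comm]
  rw [hfilter, Nat.add_sub_cancel, Nat.add_one_mul_choose_add_one]
  exact h.symm

/-- Equation (lqppp) of Getzler–Okounkov–Pandharipande, coefficient of `dz_k`:
for `n ≥ 1`, `i ≥ 1` and each `k ∈ {1,…,n}`,
`i C(n-1,i) Z^{n-i-1} = ∑_{I ∋ k, I ⊊ {1,…,n}} C(|I|-1,i-1) Z_I^{|I|-i} (Z-Z_I)^{n-|I|-1}`
as polynomials in `z_1, …, z_n` over `ℚ`. -/
theorem lqppp_identity (n : ℕ) (hn : 1 ≤ n) (i : ℕ) (hi : 1 ≤ i) (k : Fin n) :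
    ((i * Nat.choose (n - 1) i : ℕ) : MvPolynomial (Fin n) ℚ) *
        (∑ j, X j) ^ (n - i - 1) =
      ∑ I ∈ Finset.univ.powerset.filter (fun I : Finset (Fin n) => k ∈ I ∧ I ≠ Finset.univ),
        ((Nat.choose (I.card - 1) (i - 1) : ℕ) : MvPolynomial (Fin n) ℚ) *
          (∑ j ∈ I, X j) ^ (I.card - i) *
          ((∑ j, X j) - ∑ j ∈ I, X j) ^ (n - I.card - 1) :=
  lqppp_identity_general n i hi k
end

section
/- The Cayley-type tree identity: for n \ge 2 and indeterminates z_1, ..., z_n, one has Z^{n-2} = \sum_{T} \prod_{i=1}^n z_i^{d(T,i)-1}, where the sum is over all trees T on the vertex set \{1,...,n\}, d(T,i) denotes the degree (valence) of vertex i in T, and Z = z_1 + ... + z_n. -/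
open Finset MvPolynomial

/-- A tree on the vertex set `{1,…,n}` (here `Fin n`), presented as its edge set: a set of
`n-1` unordered pairs of distinct vertices whose associated graph is connected. -/
def IsTreeEdgeSet (n : ℕ) (T : Finset (Sym2 (Fin n))) : Prop :=
  T.card = n - 1 ∧ (∀ e ∈ T, ¬ e.IsDiag) ∧ (SimpleGraph.fromEdgeSet (↑T : Set (Sym2 (Fin n)))).Connected

/-- The degree (valence) `d(T,i)` of the vertex `i` in the tree `T`. -/
def treeDegree {n : ℕ} (T : Finset (Sym2 (Fin n))) (i : Fin n) : ℕ :=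
  (T.filter (fun e => i ∈ e)).card

/-!
Both sides are homogeneous of degree `n - 2 < n`, so it suffices that they agree after setting any
single variable `z_p` to `0`. On the right only the trees in which `p` is a leaf survive; deleting
the leaf `p` and remembering its neighbour `b` identifies them with the pairs `(T', b)` of a tree
`T'` on the remaining `n - 1` vertices and a vertex `b`, and the monomial of the tree becomes `z_b`
times that of `T'`. So the right side specializes to `Z'` times the right side for `n - 1`
vertices, where `Z' = Z - z_p`; by induction this is `Z' ^ (n - 2)`, the specialization of the
left side.
-/

namespace MvPolynomial

variable {σ R : Type*} [CommSemiring R] [DecidableEq σ]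

theorem aeval_update_X_zero_monomial (i : σ) (m : σ →₀ ℕ) (r : R) :
    aeval (Function.update X i 0) (monomial m r) = if m i = 0 then monomial m r else 0 := by
  rw [aeval_monomial, monomial_eq, algebraMap_eq]
  split_ifs with hm
  · congr 1
    refine Finsupp.prod_congr fun j hj => ?_
    rw [Function.update_of_ne (by rintro rfl; exact Finsupp.mem_support_iff.mp hj hm)]
  · rw [Finsupp.prod, Finset.prod_eq_zero (Finsupp.mem_support_iff.mpr hm) (by simp [hm]),
      mul_zero]

theorem coeff_aeval_update_X_zero (i : σ) (p : MvPolynomial σ R) {m : σ →₀ ℕ}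
    (hm : m i = 0) : coeff m (aeval (Function.update X i 0) p) = coeff m p := by
  induction p using MvPolynomial.induction_on' with
  | monomial m' r =>
    rw [aeval_update_X_zero_monomial]
    split_ifs with hm'
    · rfl
    · rw [coeff_zero, coeff_monomial, if_neg (by rintro rfl; exact hm' hm)]
  | add p q hp hq => rw [map_add, coeff_add, coeff_add, hp, hq]

/-- Each monomial of degree smaller than the number of variables misses some variable, so its
coefficient survives one of the specializations. -/
theorem eq_of_isHomogeneous_of_aeval_update_X_zero [Fintype σ] {p q : MvPolynomial σ R} {k : ℕ}
    (hp : p.IsHomogeneous k) (hq : q.IsHomogeneous k) (hk : k < Fintype.card σ)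
    (h : ∀ i, aeval (Function.update X i 0 : σ → MvPolynomial σ R) p =
      aeval (Function.update X i 0 : σ → MvPolynomial σ R) q) : p = q := by
  ext m
  by_cases hm : ∃ i, m i = 0
  · obtain ⟨i, hi⟩ := hm
    rw [← coeff_aeval_update_X_zero i p hi, ← coeff_aeval_update_X_zero i q hi, h]
  · push Not at hm
    have hdeg : m.degree ≠ k := by
      have : Fintype.card σ ≤ m.degree := by
        rw [Finsupp.degree_eq_sum, Fintype.card_eq_sum_ones]
        exact Finset.sum_le_sum fun i _ => Nat.one_le_iff_ne_zero.mpr (hm i)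
      omega
    rw [hp.coeff_eq_zero hdeg, hq.coeff_eq_zero hdeg]

theorem aeval_update_X_zero_eq_rename_comp {n : ℕ} (p : Fin (n + 1)) :
    (aeval (Function.update X p 0) : MvPolynomial (Fin (n + 1)) R →ₐ[R] _) =
      (rename p.succAbove).comp (aeval (Fin.insertNth p 0 X)) := by
  ext j
  rcases p.eq_self_or_eq_succAbove j with rfl | ⟨i, rfl⟩
  · simp
  · simp [Fin.succAbove_ne]

end MvPolynomial

section Trees

variable {n : ℕ}

theorem SimpleGraph.Preconnected.comap_succAbove {G : SimpleGraph (Fin (n + 1))}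
    (hG : G.Preconnected) {p : Fin (n + 1)} (hp : (G.neighborSet p).Subsingleton) :
    (G.comap p.succAbove).Preconnected := by
  have hind : (G.induce {x | x ≠ p}).Preconnected :=
    hG.induce_of_degree_eq_one fun _ hv => not_not.mp hv ▸ hp
  exact (SimpleGraph.Iso.comap (finSuccAboveEquiv p) _).preconnected_iff.mpr hind

theorem Sym2.exists_map_succAbove_eq {p : Fin (n + 1)} {x : Sym2 (Fin (n + 1))} (hx : p ∉ x) :
    ∃ y, Sym2.map p.succAbove y = x := by
  induction x with
  | _ u v =>
    obtain ⟨u', rfl⟩ := Fin.exists_succAbove_eq (x := u) (y := p) (by rintro rfl; simp at hx)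
    obtain ⟨v', rfl⟩ := Fin.exists_succAbove_eq (x := v) (y := p) (by rintro rfl; simp at hx)
    exact ⟨s(u', v'), rfl⟩


theorem sum_treeDegree {T : Finset (Sym2 (Fin n))} (hT : ∀ e ∈ T, ¬e.IsDiag) :
    ∑ i, treeDegree T i = 2 * #T := by
  calc ∑ i, treeDegree T i = ∑ e ∈ T, #(univ.filter (· ∈ e)) :=
        sum_card_bipartiteAbove_eq_sum_card_bipartiteBelow (r := fun i e => i ∈ e)
    _ = ∑ e ∈ T, 2 := sum_congr rfl fun e he => by
        rw [← e.card_toFinset_of_not_isDiag (hT e he)]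
        congr 1
        ext
        simp
    _ = 2 * #T := by rw [sum_const, smul_eq_mul, mul_comm]

theorem IsTreeEdgeSet.one_le_treeDegree {T : Finset (Sym2 (Fin n))} (hT : IsTreeEdgeSet n T)
    (hn : 2 ≤ n) (i : Fin n) : 1 ≤ treeDegree T i := by
  have : Nontrivial (Fin n) := Fin.nontrivial_iff_two_le.mpr hn
  obtain ⟨j, hij⟩ := (SimpleGraph.mem_support _).mp
    (hT.2.2.preconnected.support_eq_univ ▸ Set.mem_univ i)
  exact card_pos.mpr ⟨s(i, j), mem_filter.mpr ⟨hij.1, Sym2.mem_mk_left _ _⟩⟩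

theorem IsTreeEdgeSet.sum_treeDegree_sub_one {T : Finset (Sym2 (Fin n))} (hT : IsTreeEdgeSet n T)
    (hn : 2 ≤ n) : ∑ i, (treeDegree T i - 1) = n - 2 := by
  rw [sum_tsub_distrib _ fun i _ => hT.one_le_treeDegree hn i, sum_treeDegree hT.2.1, hT.1,
    sum_const, card_univ, Fintype.card_fin, smul_eq_mul, mul_one]
  omega

theorem treeDegree_map {m : ℕ} (f : Fin n ↪ Fin m) (T : Finset (Sym2 (Fin n))) (i : Fin n) :
    treeDegree (T.map f.sym2Map) (f i) = treeDegree T i := by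
  rw [treeDegree, filter_map, card_map]
  congr 2
  ext e
  simp [f.injective.eq_iff]

def attachLeaf (p : Fin (n + 1)) (T : Finset (Sym2 (Fin n))) (b : Fin n) :
    Finset (Sym2 (Fin (n + 1))) :=
  insert s(p, p.succAbove b) (T.map p.succAboveEmb.sym2Map)

section attachLeaf

variable (p : Fin (n + 1)) (T : Finset (Sym2 (Fin n))) (b : Fin n)

theorem notMem_of_mem_map_succAboveEmb {e : Sym2 (Fin (n + 1))}
    (he : e ∈ T.map p.succAboveEmb.sym2Map) : p ∉ e := by
  obtain ⟨e, -, rfl⟩ := mem_map.mp he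
  simp [Fin.succAbove_ne]

theorem filter_mem_attachLeaf :
    (attachLeaf p T b).filter (p ∈ ·) = {s(p, p.succAbove b)} := by
  rw [attachLeaf, filter_insert, if_pos (Sym2.mem_mk_left _ _),
    filter_false_of_mem fun e he => notMem_of_mem_map_succAboveEmb p T he]
  rfl

theorem filter_notMem_attachLeaf :
    (attachLeaf p T b).filter (p ∉ ·) = T.map p.succAboveEmb.sym2Map := by
  rw [attachLeaf, filter_insert, if_neg (not_not.mpr (Sym2.mem_mk_left _ _)),
    filter_true_of_mem fun e he => notMem_of_mem_map_succAboveEmb p T he]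

theorem card_attachLeaf : #(attachLeaf p T b) = #T + 1 := by
  rw [attachLeaf, card_insert_of_notMem fun h =>
    notMem_of_mem_map_succAboveEmb p T h (Sym2.mem_mk_left _ _), card_map]

theorem treeDegree_attachLeaf_self : treeDegree (attachLeaf p T b) p = 1 := by
  rw [treeDegree, filter_mem_attachLeaf, card_singleton]

theorem treeDegree_attachLeaf_succAbove (i : Fin n) :
    treeDegree (attachLeaf p T b) (p.succAbove i) = treeDegree T i + if i = b then 1 else 0 := by
  have hmem : p.succAbove i ∈ s(p, p.succAbove b) ↔ i = b := by
    simp [Sym2.mem_iff, Fin.succAbove_ne p i]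
  rw [treeDegree, attachLeaf, filter_insert, ← treeDegree_map p.succAboveEmb]
  split_ifs with h₁ h₂ h₂
  · rw [card_insert_of_notMem fun h => notMem_of_mem_map_succAboveEmb p T
      (mem_filter.mp h).1 (Sym2.mem_mk_left _ _)]
    rfl
  · exact absurd (hmem.mp h₁) h₂
  · exact absurd (hmem.mpr h₂) h₁
  · rfl

theorem attachLeaf_inj {T' : Finset (Sym2 (Fin n))} {b' : Fin n} :
    attachLeaf p T b = attachLeaf p T' b' ↔ T = T' ∧ b = b' := by
  refine ⟨fun h => ⟨?_, ?_⟩, fun ⟨hT, hb⟩ => hT ▸ hb ▸ rfl⟩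
  · have := congrArg (filter (p ∉ ·)) h
    rwa [filter_notMem_attachLeaf, filter_notMem_attachLeaf, map_inj] at this
  · have := congrArg (filter (p ∈ ·)) h
    rwa [filter_mem_attachLeaf, filter_mem_attachLeaf, singleton_inj, Sym2.congr_right,
      Fin.succAbove_right_inj] at this

end attachLeaf

theorem isTreeEdgeSet_attachLeaf {p : Fin (n + 1)} {T : Finset (Sym2 (Fin n))}
    (hT : IsTreeEdgeSet n T) (b : Fin n) :
    IsTreeEdgeSet (n + 1) (attachLeaf p T b) := by
  obtain ⟨hcard, hdiag, hconn⟩ := hT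
  have hn : 0 < n := Fin.pos_iff_nonempty.mpr hconn.nonempty
  refine ⟨by rw [card_attachLeaf, hcard]; omega, fun e he => ?_, ?_⟩
  · rcases mem_insert.mp he with rfl | he
    · exact Sym2.mk_isDiag_iff.not.mpr (Fin.succAbove_ne p b).symm
    · obtain ⟨e', he', rfl⟩ := mem_map.mp he
      exact (Sym2.isDiag_map Fin.succAbove_right_injective).not.mpr (hdiag e' he')
  · let φ : SimpleGraph.fromEdgeSet (T : Set (Sym2 (Fin n))) →g
        SimpleGraph.fromEdgeSet (attachLeaf p T b : Set (Sym2 (Fin (n + 1)))) :=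
      ⟨p.succAbove, fun {u v} huv => by
        simp only [SimpleGraph.fromEdgeSet_adj, mem_coe] at huv ⊢
        exact ⟨mem_insert_of_mem (mem_map_of_mem p.succAboveEmb.sym2Map huv.1),
          Fin.succAbove_right_injective.ne huv.2⟩⟩
    have hpb : (SimpleGraph.fromEdgeSet (attachLeaf p T b : Set (Sym2 (Fin (n + 1))))).Reachable p
        (p.succAbove b) :=
      SimpleGraph.Adj.reachable ⟨mem_insert_self _ _, (Fin.succAbove_ne p b).symm⟩
    refine SimpleGraph.connected_iff_exists_forall_reachable _ |>.mpr ⟨p, fun w => ?_⟩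
    rcases p.eq_self_or_eq_succAbove w with rfl | ⟨i, rfl⟩
    · rfl
    · exact hpb.trans ((hconn b i).map φ)

theorem attachLeaf_preimage_eq {p : Fin (n + 1)} {T : Finset (Sym2 (Fin (n + 1)))} {b : Fin n}
    (hb : s(p, p.succAbove b) ∈ T) (hleaf : ∀ x ∈ T, p ∈ x → x = s(p, p.succAbove b)) :
    attachLeaf p (T.preimage (Sym2.map p.succAbove)
      (Sym2.map.injective Fin.succAbove_right_injective).injOn) b = T := by
  ext x
  by_cases hx : p ∈ x
  · rw [attachLeaf, mem_insert, or_iff_left fun h => notMem_of_mem_map_succAboveEmb p _ h hx]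
    exact ⟨by rintro rfl; exact hb, fun hxT => hleaf x hxT hx⟩
  · obtain ⟨y, rfl⟩ := Sym2.exists_map_succAbove_eq hx
    have : Sym2.map p.succAbove y ≠ s(p, p.succAbove b) := by
      rintro h; exact hx (h ▸ Sym2.mem_mk_left _ _)
    rw [attachLeaf, mem_insert, or_iff_right this, mem_map]
    exact ⟨fun ⟨y', hy', hy⟩ => (Sym2.map.injective Fin.succAbove_right_injective hy) ▸
      mem_preimage.mp hy', fun hy => ⟨y, mem_preimage.mpr hy, rfl⟩⟩

theorem IsTreeEdgeSet.exists_attachLeaf {p : Fin (n + 1)} {T : Finset (Sym2 (Fin (n + 1)))}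
    (hT : IsTreeEdgeSet (n + 1) T) (hn : n ≠ 0) (hp : treeDegree T p = 1) :
    ∃ T' b, IsTreeEdgeSet n T' ∧ attachLeaf p T' b = T := by
  obtain ⟨hcard, hdiag, hconn⟩ := hT
  obtain ⟨e, he⟩ := card_eq_one.mp hp
  have hmem : ∀ x ∈ T, p ∈ x → x = e := fun x hxT hx =>
    mem_singleton.mp (he ▸ mem_filter.mpr ⟨hxT, hx⟩)
  obtain ⟨heT, hpe⟩ := mem_filter.mp (he ▸ mem_singleton_self e)
  obtain ⟨b, hb⟩ := Fin.exists_succAbove_eq (Sym2.other_ne (hdiag e heT) hpe)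
  obtain rfl : s(p, p.succAbove b) = e := hb ▸ Sym2.other_spec hpe
  set T' := T.preimage (Sym2.map p.succAbove)
    (Sym2.map.injective Fin.succAbove_right_injective).injOn
  have hattach : attachLeaf p T' b = T := attachLeaf_preimage_eq heT hmem
  have hleaf :
      ((SimpleGraph.fromEdgeSet (T : Set (Sym2 (Fin (n + 1))))).neighborSet p).Subsingleton := by
    intro w hw w' hw'
    exact Sym2.congr_right.mp ((hmem _ hw.1 (Sym2.mem_mk_left _ _)).trans
      (hmem _ hw'.1 (Sym2.mem_mk_left _ _)).symm)
  have hcomap : SimpleGraph.fromEdgeSet (T' : Set (Sym2 (Fin n))) =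
      (SimpleGraph.fromEdgeSet (T : Set (Sym2 (Fin (n + 1))))).comap p.succAbove := by
    ext u v
    simp [T']
  refine ⟨T', b, ⟨?_, fun y hy => ?_, ?_⟩, hattach⟩
  · have := card_attachLeaf p T' b
    rw [hattach, hcard] at this
    omega
  · exact (Sym2.isDiag_map Fin.succAbove_right_injective).not.mp (hdiag _ (mem_preimage.mp hy))
  · rw [hcomap]
    have : Nonempty (Fin n) := ⟨⟨0, Nat.pos_of_ne_zero hn⟩⟩
    exact ⟨hconn.preconnected.comap_succAbove hleaf⟩

open scoped Classical

theorem sum_filter_treeDegree_eq_one {M : Type*} [AddCommMonoid M] (hn : n ≠ 0) (p : Fin (n + 1))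
    (f : Finset (Sym2 (Fin (n + 1))) → M) :
    ∑ T with IsTreeEdgeSet (n + 1) T ∧ treeDegree T p = 1, f T =
      ∑ T with IsTreeEdgeSet n T, ∑ b, f (attachLeaf p T b) := by
  rw [← sum_product']
  refine (sum_nbij (fun x : Finset (Sym2 (Fin n)) × Fin n => attachLeaf p x.1 x.2) ?_ ?_ ?_
    fun _ _ => rfl).symm
  · rintro ⟨T, b⟩ h
    simp only [mem_product, mem_filter, mem_univ, true_and] at h ⊢
    exact ⟨isTreeEdgeSet_attachLeaf h.1 b, treeDegree_attachLeaf_self p T b⟩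
  · rintro ⟨T, b⟩ - ⟨T', b'⟩ - h
    exact Prod.ext_iff.mpr ((attachLeaf_inj p T b).mp h)
  · intro T hT
    obtain ⟨-, hT, hp⟩ := mem_filter.mp (mem_coe.mp hT)
    obtain ⟨T', b, hT', rfl⟩ := hT.exists_attachLeaf hn hp
    exact ⟨(T', b), by simp [hT'], rfl⟩

variable (R : Type*) [CommSemiring R]

noncomputable def treePolynomial (n : ℕ) : MvPolynomial (Fin n) R :=
  ∑ T with IsTreeEdgeSet n T, ∏ i, X i ^ (treeDegree T i - 1)

theorem isHomogeneous_treePolynomial (hn : 2 ≤ n) :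
    (treePolynomial R n).IsHomogeneous (n - 2) := by
  refine IsHomogeneous.sum _ _ _ fun T hT => ?_
  rw [← (mem_filter.mp hT).2.sum_treeDegree_sub_one hn]
  exact IsHomogeneous.prod _ _ _ fun i _ => isHomogeneous_X_pow i _

theorem filter_isTreeEdgeSet_two : ({T | IsTreeEdgeSet 2 T} : Finset _) = {{s(0, 1)}} := by
  ext T
  simp only [mem_filter, mem_univ, true_and, mem_singleton]
  constructor
  · rintro ⟨hcard, hdiag, -⟩
    obtain ⟨e, rfl⟩ := card_eq_one.mp hcard
    have : ∀ e : Sym2 (Fin 2), ¬e.IsDiag → e = s(0, 1) := by decide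
    rw [this e (hdiag e (mem_singleton_self e))]
  · rintro rfl
    have : SimpleGraph.fromEdgeSet ({s(0, 1)} : Set (Sym2 (Fin 2))) = ⊤ := by
      ext u v
      fin_cases u <;> fin_cases v <;> simp
    refine ⟨rfl, by decide, ?_⟩
    rw [coe_singleton, this]
    exact SimpleGraph.connected_top

theorem treePolynomial_two : treePolynomial R 2 = 1 := by
  have : ∀ i, treeDegree {s((0 : Fin 2), 1)} i = 1 := by decide
  simp [treePolynomial, filter_isTreeEdgeSet_two, this]

variable {R}

theorem aeval_insertNth_zero_prod_X_pow {T : Finset (Sym2 (Fin (n + 1)))} (hn : 1 ≤ n)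
    (hT : IsTreeEdgeSet (n + 1) T) (p : Fin (n + 1)) :
    aeval (Fin.insertNth p 0 X : _ → MvPolynomial (Fin n) R)
        (∏ i, X i ^ (treeDegree T i - 1) : MvPolynomial (Fin (n + 1)) R) =
      if treeDegree T p = 1 then ∏ i, X i ^ (treeDegree T (p.succAbove i) - 1) else 0 := by
  have := hT.one_le_treeDegree (by omega) p
  simp only [map_prod, map_pow, aeval_X]
  rw [Fin.prod_univ_succAbove _ p, Fin.insertNth_apply_same]
  simp only [Fin.insertNth_apply_succAbove]
  split_ifs with hp
  · rw [hp, pow_zero, one_mul]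
  · rw [zero_pow (by omega), zero_mul]

theorem prod_X_pow_treeDegree_attachLeaf {T : Finset (Sym2 (Fin n))} (hn : 2 ≤ n)
    (hT : IsTreeEdgeSet n T) (p : Fin (n + 1)) (b : Fin n) :
    ∏ i, (X i : MvPolynomial _ R) ^ (treeDegree (attachLeaf p T b) (p.succAbove i) - 1) =
      X b * ∏ i, X i ^ (treeDegree T i - 1) := by
  have hexp (i : Fin n) : treeDegree (attachLeaf p T b) (p.succAbove i) - 1 =
      (treeDegree T i - 1) + if i = b then 1 else 0 := by
    have := hT.one_le_treeDegree hn i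
    rw [treeDegree_attachLeaf_succAbove]
    omega
  simp only [hexp, pow_add, prod_mul_distrib, pow_ite, pow_one, pow_zero, prod_ite_eq', mem_univ,
    if_true, mul_comm]

theorem aeval_insertNth_zero_treePolynomial (hn : 2 ≤ n) (p : Fin (n + 1)) :
    aeval (Fin.insertNth p 0 X) (treePolynomial R (n + 1)) = (∑ i, X i) * treePolynomial R n := by
  calc aeval (Fin.insertNth p 0 X) (treePolynomial R (n + 1))
      = ∑ T with IsTreeEdgeSet (n + 1) T ∧ treeDegree T p = 1,
          ∏ i, X i ^ (treeDegree T (p.succAbove i) - 1) := by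
        rw [treePolynomial, map_sum, ← filter_filter, sum_filter (treeDegree · p = 1)]
        exact sum_congr rfl fun T hT =>
          aeval_insertNth_zero_prod_X_pow (by omega) (mem_filter.mp hT).2 p
    _ = ∑ T with IsTreeEdgeSet n T, ∑ b, X b * ∏ i, X i ^ (treeDegree T i - 1) := by
        rw [sum_filter_treeDegree_eq_one (by omega)]
        exact sum_congr rfl fun T hT => sum_congr rfl fun b _ =>
          prod_X_pow_treeDegree_attachLeaf hn (mem_filter.mp hT).2 p b
    _ = (∑ i, X i) * treePolynomial R n := by
        simp only [← sum_mul, treePolynomial, mul_sum]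

theorem aeval_insertNth_zero_sum_X_pow (p : Fin (n + 1)) (k : ℕ) :
    aeval (Fin.insertNth p 0 X : _ → MvPolynomial (Fin n) R)
        ((∑ i, X i) ^ k : MvPolynomial (Fin (n + 1)) R) =
      (∑ i, X i) ^ k := by
  simp [Fin.sum_univ_succAbove _ p]

theorem treePolynomial_eq (hn : 2 ≤ n) : treePolynomial R n = (∑ i, X i) ^ (n - 2) := by
  induction n, hn using Nat.le_induction with
  | base => rw [treePolynomial_two, Nat.sub_self, pow_zero]
  | succ n hn ih =>
    have hsum : (∑ i, X i : MvPolynomial (Fin (n + 1)) R).IsHomogeneous 1 :=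
      IsHomogeneous.sum _ _ _ fun i _ => isHomogeneous_X R i
    refine eq_of_isHomogeneous_of_aeval_update_X_zero (isHomogeneous_treePolynomial R (by omega))
      (by simpa using hsum.pow (n + 1 - 2)) (by rw [Fintype.card_fin]; omega) fun p => ?_
    rw [aeval_update_X_zero_eq_rename_comp, AlgHom.comp_apply, AlgHom.comp_apply,
      aeval_insertNth_zero_treePolynomial hn, aeval_insertNth_zero_sum_X_pow, ih, ← pow_succ']
    congr 3
    omega

end Trees

open scoped Classical in
/-- The weighted Cayley formula: for `n ≥ 2`,
`Z^{n-2} = ∑_T ∏_i z_i^{d(T,i)-1}`, the sum being over all trees `T` on `{1,…,n}`,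
as polynomials in `z_1, …, z_n` over `ℚ`, where `Z = z_1 + ⋯ + z_n`. -/
theorem weighted_cayley (n : ℕ) (hn : 2 ≤ n) :
    (∑ i, (X i : MvPolynomial (Fin n) ℚ)) ^ (n - 2) =
      ∑ T ∈ Finset.univ.filter (fun T : Finset (Sym2 (Fin n)) => IsTreeEdgeSet n T),
        ∏ i, (X i : MvPolynomial (Fin n) ℚ) ^ (treeDegree T i - 1) :=
  (treePolynomial_eq (R := ℚ) hn).symm
end

section
/- For variables x, y, z_1, ..., z_n and each fixed k \in \{1,...,n\}, the identity (x+y+Z)^{n-1} = y \sum_{I \subseteq \{1,...,n\}, k \in I} (x+Z_I)^{|I|-1} (y+Z-Z_I)^{n-|I|-1} holds as a polynomial identity (the only term with a potentially negative exponent is I = \{1,...,n\}, where the factor y(y+Z-Z_I)^{-1} = y \cdot y^{-1} = 1, so the identity reads: (x+Z)^{n-1} + y \sum_{k \in I \subsetneq \{1,...,n\}} (x+Z_I)^{|I|-1}(y+Z-Z_I)^{n-|I|-1} = (x+y+Z)^{n-1}). -/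
open Finset MvPolynomial

/-!
With `s = {1,…,n} ∖ {k}`, `x' = x + z_k` and `I = t ∪ {k}`, the identity is Hurwitz's identity
`(x' + Z_s)^|s| + y ∑_{t ⊊ s} (x' + Z_t)^|t| (y + Z_{s∖t})^(|s∖t|-1) = (x' + y + Z_s)^|s|`.
It follows by induction on `s`: when an element `a` is added, the subsets `t` avoiding `a`
contribute the Abel sum `A_s(x, y + z_a)`, where
`A_s(P, Q) = ∑_{t ⊆ s} (P + Z_t)^|t| (Q + Z_{s∖t})^|s∖t|`, and those containing `a`
contribute `-A_s(x + z_a, y)` plus terms controlled by the induction hypothesis. The two Abel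
sums cancel because `A_s(P, Q)` depends only on `P + Q`: as polynomials in `w`, `A_s(P + w, Q)`
and `A_s(P, Q + w)` agree at `w = 0`, and their derivatives are sums of Abel sums over the
sets `s ∖ {j}`, which agree by induction on `s`.
-/

theorem Polynomial.eq_of_derivative_eq_of_eval_zero_eq {R : Type*} [CommRing R]
    [IsAddTorsionFree R] {p q : Polynomial R} (hd : p.derivative = q.derivative)
    (h0 : p.eval 0 = q.eval 0) : p = q := by
  have h := Polynomial.eq_C_of_derivative_eq_zero (p := p - q)
    (by rw [Polynomial.derivative_sub, hd, sub_self])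
  rw [Polynomial.coeff_zero_eq_eval_zero, Polynomial.eval_sub, h0, sub_self, map_zero] at h
  exact sub_eq_zero.1 h

namespace Hurwitz

variable {ι : Type*} [DecidableEq ι] {R : Type*} [CommRing R]

lemma sum_powerset_card_nsmul {M : Type*} [AddCommMonoid M] (s : Finset ι)
    (f : Finset ι → M) :
    ∑ t ∈ s.powerset, #t • f t = ∑ k ∈ s, ∑ t ∈ (s.erase k).powerset, f (insert k t) := by
  calc ∑ t ∈ s.powerset, #t • f t
      = ∑ t ∈ s.powerset, ∑ k ∈ s, if k ∈ t then f t else 0 :=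
        sum_congr rfl fun t ht => by
          rw [sum_ite_mem, inter_eq_right.2 (mem_powerset.1 ht), sum_const]
    _ = ∑ k ∈ s, ∑ t ∈ s.powerset, if k ∈ t then f t else 0 := sum_comm
    _ = _ := sum_congr rfl fun k hk => by
        have h := sum_powerset_insert (notMem_erase k s) fun t => if k ∈ t then f t else 0
        rw [insert_erase hk] at h
        rw [h, sum_eq_zero fun t ht =>
          if_neg fun hkt => notMem_erase k s (mem_powerset.1 ht hkt)]
        simp

lemma sum_ssubsets_insert {M : Type*} [AddCancelCommMonoid M] {s : Finset ι} {a : ι}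
    (ha : a ∉ s) (f : Finset ι → M) :
    ∑ t ∈ (insert a s).ssubsets, f t =
      ∑ t ∈ s.powerset, f t + ∑ t ∈ s.ssubsets, f (insert a t) := by
  apply add_right_cancel (b := f (insert a s))
  rw [ssubsets, sum_erase_add _ _ (mem_powerset_self _), sum_powerset_insert ha, add_assoc,
    ssubsets, sum_erase_add _ _ (mem_powerset_self _)]

lemma sum_ssubsets_erase_insert {M : Type*} [AddCommMonoid M] {u : Finset ι} {k : ι}
    (hk : k ∈ u) (f : Finset ι → M) :
    ∑ t ∈ (u.erase k).ssubsets, f (insert k t) =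
      ∑ I ∈ u.powerset.filter (fun I => k ∈ I ∧ I ≠ u), f I := by
  have hk' : ∀ {t}, t ⊆ u.erase k → k ∉ t := fun ht h => notMem_erase k u (ht h)
  refine sum_nbij' (insert k) (·.erase k) (fun t ht => ?_) (fun I hI => ?_) (fun t ht => ?_)
    (fun I hI => ?_) (fun _ _ => rfl)
  · simp only [mem_ssubsets, mem_filter, mem_powerset] at ht ⊢
    grind
  · simp only [mem_filter, mem_powerset] at hI
    refine mem_ssubsets.2 ((erase_subset_erase k hI.1).ssubset_of_ne fun h => hI.2.2 ?_)
    rw [← insert_erase hI.2.1, h, insert_erase hk]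
  · exact erase_insert (hk' (mem_ssubsets.1 ht).1)
  · exact insert_erase (mem_filter.1 hI).2.1

def abelSum (ζ : ι → R) (s : Finset ι) (P Q : R) : R :=
  ∑ t ∈ s.powerset, (P + ∑ i ∈ t, ζ i) ^ #t * (Q + ∑ i ∈ s \ t, ζ i) ^ #(s \ t)

lemma map_abelSum {S : Type*} [CommRing S] (φ : R →+* S) (ζ : ι → R) (s : Finset ι) (P Q : R) :
    φ (abelSum ζ s P Q) = abelSum (fun i => φ (ζ i)) s (φ P) (φ Q) := by
  simp [abelSum]

lemma abelSum_comm (ζ : ι → R) (s : Finset ι) (P Q : R) :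
    abelSum ζ s P Q = abelSum ζ s Q P := by
  refine sum_nbij' (s \ ·) (s \ ·) (by simp) (by simp) (fun t ht => ?_) (fun t ht => ?_)
    (fun t ht => ?_) <;>
  rw [Finset.sdiff_sdiff_eq_self (mem_powerset.1 ht)]
  exact mul_comm _ _

open Polynomial (derivative derivative_sum derivative_mul derivative_pow derivative_add
  derivative_X derivative_C) in
lemma derivative_abelSum (ζ : ι → R) (s : Finset ι) (P Q : R) :
    derivative (abelSum (fun i => Polynomial.C (ζ i)) s (Polynomial.X + Polynomial.C P)
        (Polynomial.C Q)) =
      ∑ k ∈ s, abelSum (fun i => Polynomial.C (ζ i)) (s.erase k)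
        (Polynomial.X + Polynomial.C (P + ζ k)) (Polynomial.C Q) := by
  simp only [abelSum, derivative_sum, derivative_mul, derivative_pow, derivative_add,
    derivative_X, derivative_C, sum_const_zero, add_zero, mul_zero, mul_one]
  simp only [Polynomial.C_eq_natCast, ← nsmul_eq_mul, smul_mul_assoc]
  rw [sum_powerset_card_nsmul]
  refine sum_congr rfl fun k hk => sum_congr rfl fun t ht => ?_
  have hkt : k ∉ t := fun h => notMem_erase k s (mem_powerset.1 ht h)
  rw [card_insert_of_notMem hkt, Nat.add_sub_cancel, sum_insert hkt, sdiff_insert,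
    ← erase_sdiff_comm, Polynomial.C_add]
  ring

-- `t ⊊ s`, so the exponent `#(s \ t) - 1` is never truncated.
def hurwitzSum (ζ : ι → R) (s : Finset ι) (x y : R) : R :=
  ∑ t ∈ s.ssubsets, (x + ∑ i ∈ t, ζ i) ^ #t * (y + ∑ i ∈ s \ t, ζ i) ^ (#(s \ t) - 1)

lemma hurwitzSum_insert {s : Finset ι} {a : ι} (ha : a ∉ s) (ζ : ι → R) (x y : R) :
    hurwitzSum ζ (insert a s) x y = abelSum ζ s x (y + ζ a) +
      ∑ t ∈ s.ssubsets, (x + ζ a + ∑ i ∈ t, ζ i) ^ (#t + 1) *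
        (y + ∑ i ∈ s \ t, ζ i) ^ (#(s \ t) - 1) := by
  rw [hurwitzSum, sum_ssubsets_insert ha, abelSum]
  congr 1
  · refine sum_congr rfl fun t ht => ?_
    have hat : a ∉ s \ t := fun h => ha (mem_sdiff.1 h).1
    rw [insert_sdiff_of_notMem _ fun h => ha (mem_powerset.1 ht h), sum_insert hat,
      card_insert_of_notMem hat, Nat.add_sub_cancel]
    ring
  · refine sum_congr rfl fun t ht => ?_
    have hat : a ∉ t := fun h => ha ((mem_ssubsets.1 ht).1 h)
    rw [insert_sdiff_insert, sdiff_insert_of_notMem ha, sum_insert hat,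
      card_insert_of_notMem hat, add_assoc]

lemma sum_ssubsets_pow_succ_add_abelSum (ζ : ι → R) (s : Finset ι) (x y : R) :
    ∑ t ∈ s.ssubsets, (x + ∑ i ∈ t, ζ i) ^ (#t + 1) * (y + ∑ i ∈ s \ t, ζ i) ^ (#(s \ t) - 1) +
        abelSum ζ s x y =
      (x + ∑ i ∈ s, ζ i) ^ #s + (x + y + ∑ i ∈ s, ζ i) * hurwitzSum ζ s x y := by
  rw [abelSum, ← sum_erase_add _ _ (mem_powerset_self s), ← ssubsets, hurwitzSum, mul_sum,
    ← add_assoc, ← sum_add_distrib]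
  simp only [Finset.sdiff_self, sum_empty, card_empty, pow_zero, mul_one]
  rw [add_comm]
  congr 1
  refine sum_congr rfl fun t ht => ?_
  have hts := mem_ssubsets.1 ht
  obtain ⟨d, hd⟩ : ∃ d, #(s \ t) = d + 1 :=
    Nat.exists_eq_add_one.2 (card_pos.2 (sdiff_nonempty.2 hts.2))
  rw [hd, Nat.add_sub_cancel, ← sum_sdiff hts.1 (f := ζ)]
  ring

lemma hurwitzSum_univ_erase [Fintype ι] (ζ : ι → R) (k : ι) (x y : R) :
    hurwitzSum ζ (univ.erase k) (x + ζ k) y =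
      ∑ I ∈ univ.powerset.filter (fun I => k ∈ I ∧ I ≠ univ),
        (x + ∑ i ∈ I, ζ i) ^ (#I - 1) *
          (y + ∑ i, ζ i - ∑ i ∈ I, ζ i) ^ (Fintype.card ι - #I - 1) := by
  rw [hurwitzSum, ← sum_ssubsets_erase_insert (mem_univ k)]
  refine sum_congr rfl fun t ht => ?_
  have hkt : k ∉ t := fun h => notMem_erase k univ ((mem_ssubsets.1 ht).1 h)
  rw [sum_insert hkt, card_insert_of_notMem hkt, Nat.add_sub_cancel, erase_sdiff_comm,
    ← sdiff_insert, sum_sdiff_eq_sub (subset_univ _), card_univ_sdiff, sum_insert hkt,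
    card_insert_of_notMem hkt, add_sub_assoc]
  ring

section IsAddTorsionFree

variable [IsAddTorsionFree R]

lemma abelSum_X_add_C_left_eq_right (ζ : ι → R) (s : Finset ι) (P Q : R) :
    abelSum (fun i => Polynomial.C (ζ i)) s (Polynomial.X + Polynomial.C P) (Polynomial.C Q) =
      abelSum (fun i => Polynomial.C (ζ i)) s (Polynomial.C P)
        (Polynomial.X + Polynomial.C Q) := by
  induction s using Finset.strongInduction generalizing P Q with
  | H s ih =>
  refine Polynomial.eq_of_derivative_eq_of_eval_zero_eq ?_ ?_
  · rw [abelSum_comm _ _ (Polynomial.C P), derivative_abelSum, derivative_abelSum]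
    refine sum_congr rfl fun k hk => ?_
    have h := congrArg (Polynomial.compRingHom (Polynomial.X + Polynomial.C (ζ k)))
      (ih _ (erase_ssubset hk) P Q)
    rw [map_abelSum, map_abelSum] at h
    simp only [Polynomial.coe_compRingHom, Polynomial.C_comp, Polynomial.add_comp,
      Polynomial.X_comp] at h
    rw [abelSum_comm _ _ _ (Polynomial.C P)]
    convert h using 2 <;> rw [Polynomial.C_add] <;> ring
  · rw [← Polynomial.coe_evalRingHom, map_abelSum, map_abelSum]
    simp

lemma abelSum_add_left_eq_add_right (ζ : ι → R) (s : Finset ι) (P Q w : R) :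
    abelSum ζ s (P + w) Q = abelSum ζ s P (Q + w) := by
  have h := congrArg (Polynomial.evalRingHom w) (abelSum_X_add_C_left_eq_right ζ s P Q)
  rw [map_abelSum, map_abelSum] at h
  simpa [add_comm] using h

theorem pow_card_add_mul_hurwitzSum (ζ : ι → R) (s : Finset ι) (x y : R) :
    (x + ∑ i ∈ s, ζ i) ^ #s + y * hurwitzSum ζ s x y = (x + y + ∑ i ∈ s, ζ i) ^ #s := by
  induction s using Finset.induction_on generalizing x with
  | empty => simp [hurwitzSum, ssubsets]
  | insert a s ha ih =>
    rw [hurwitzSum_insert ha, ← abelSum_add_left_eq_add_right, sum_insert ha,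
      card_insert_of_notMem ha]
    linear_combination y * sum_ssubsets_pow_succ_add_abelSum ζ s (x + ζ a) y +
      (x + y + ζ a + ∑ i ∈ s, ζ i) * ih (x + ζ a)

end IsAddTorsionFree

end Hurwitz

open Hurwitz in
/-- `x = X (.inl 0)`, `y = X (.inl 1)`, `z_i = X (.inr i)`. -/
theorem hurwitz_companion_general (n : ℕ) (k : Fin n) :
    ((X (.inl 0) : MvPolynomial (Fin 2 ⊕ Fin n) ℚ) + ∑ i, X (.inr i)) ^ (n - 1) +
      X (.inl 1) *
        ∑ I ∈ Finset.univ.powerset.filter (fun I : Finset (Fin n) => k ∈ I ∧ I ≠ Finset.univ),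
          ((X (.inl 0) : MvPolynomial (Fin 2 ⊕ Fin n) ℚ) + ∑ i ∈ I, X (.inr i)) ^ (I.card - 1) *
            ((X (.inl 1) : MvPolynomial (Fin 2 ⊕ Fin n) ℚ) + (∑ i, X (.inr i)) -
              ∑ i ∈ I, X (.inr i)) ^ (n - I.card - 1) =
      ((X (.inl 0) : MvPolynomial (Fin 2 ⊕ Fin n) ℚ) + X (.inl 1) + ∑ i, X (.inr i)) ^ (n - 1) := by
  set x : MvPolynomial (Fin 2 ⊕ Fin n) ℚ := X (.inl 0)
  set y : MvPolynomial (Fin 2 ⊕ Fin n) ℚ := X (.inl 1)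
  set ζ : Fin n → MvPolynomial (Fin 2 ⊕ Fin n) ℚ := fun i => X (.inr i)
  have h := pow_card_add_mul_hurwitzSum ζ (univ.erase k) (x + ζ k) y
  have hZ : ζ k + ∑ i ∈ univ.erase k, ζ i = ∑ i, ζ i := add_sum_erase _ _ (mem_univ k)
  have hx : x + ζ k + ∑ i ∈ univ.erase k, ζ i = x + ∑ i, ζ i := by rw [add_assoc, hZ]
  have hxy : x + ζ k + y + ∑ i ∈ univ.erase k, ζ i = x + y + ∑ i, ζ i := by rw [← hZ]; ring
  rw [hurwitzSum_univ_erase, Fintype.card_fin, card_erase_of_mem (mem_univ k), card_univ,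
    Fintype.card_fin, hx, hxy] at h
  exact h

/-- The second identity of Lemma 4.2 of Getzler–Okounkov–Pandharipande (the coefficient of
`dz_k`): for `n ≥ 1`, each `k ∈ {1,…,n}`, and indeterminates `x, y, z_1, …, z_n`,
`(x+Z)^{n-1} + y ∑_{k ∈ I ⊊ {1,…,n}} (x+Z_I)^{|I|-1}(y+Z-Z_I)^{n-|I|-1} = (x+y+Z)^{n-1}`,
as polynomials over `ℚ`. Here `x = X (.inl 0)`, `y = X (.inl 1)`, `z_i = X (.inr i)`. -/
theorem hurwitz_companion (n : ℕ) (hn : 1 ≤ n) (k : Fin n) :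
    ((X (.inl 0) : MvPolynomial (Fin 2 ⊕ Fin n) ℚ) + ∑ i, X (.inr i)) ^ (n - 1) +
      X (.inl 1) *
        ∑ I ∈ Finset.univ.powerset.filter (fun I : Finset (Fin n) => k ∈ I ∧ I ≠ Finset.univ),
          ((X (.inl 0) : MvPolynomial (Fin 2 ⊕ Fin n) ℚ) + ∑ i ∈ I, X (.inr i)) ^ (I.card - 1) *
            ((X (.inl 1) : MvPolynomial (Fin 2 ⊕ Fin n) ℚ) + (∑ i, X (.inr i)) -
              ∑ i ∈ I, X (.inr i)) ^ (n - I.card - 1) =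
      ((X (.inl 0) : MvPolynomial (Fin 2 ⊕ Fin n) ℚ) + X (.inl 1) + ∑ i, X (.inr i)) ^ (n - 1) :=
  hurwitz_companion_general n k
end

section
/- Setting all z_i equal to 1 in the Hurwitz identity gives: for n \ge 1 and indeterminates x, y, (x+y)(x+y+n)^{n-1} = x(x+n)^{n-1} + y(y+n)^{n-1} + xy \sum_{j=1}^{n-1} \binom{n}{j} (x+j)^{j-1} (y+n-j)^{n-j-1}, as an identity of polynomials in x and y over \mathbb{Q}. -/
/-!
The right-hand side is the binomial convolution of the Abel polynomials `A_n(x) = x (x + n)^{n-1}`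
(with `A_0 = 1`), so the identity says that they are of binomial type:
`A_n(x + y) = ∑ C(n, k) A_k(x) A_{n-k}(y)`. This holds for `A_n(x) = x (x - a n)^{n-1}` and any `a`,
by induction on `n`, viewing both sides as polynomials in `x`: they agree at `x = 0` because
`A_k(0) = 0` for `k > 0`, and since `A_n'(x) = n A_{n-1}(x - a)` and
`(k + 1) C(n + 1, k + 1) = (n + 1) C(n, k)`, both derivatives are `n + 1` times the previous case
evaluated at `x - a`.
-/

open Finset

theorem Finset.Nat.sum_antidiagonal_succ_eq_add_add_sum_Icc {M : Type*} [AddCommMonoid M] (n : ℕ)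
    (f : ℕ × ℕ → M) :
    ∑ p ∈ antidiagonal (n + 1), f p =
      f (0, n + 1) + f (n + 1, 0) + ∑ j ∈ Icc 1 n, f (j, n + 1 - j) := by
  rw [Nat.sum_antidiagonal_eq_sum_range_succ_mk, sum_range_succ, sum_range_succ', Nat.sub_self,
    ← Ico_add_one_right_eq_Icc, sum_Ico_eq_sum_range]
  simp only [Nat.sub_zero, Nat.add_sub_add_right, add_comm 1, Nat.add_sub_cancel]
  ac_rfl

namespace Polynomial

theorem eq_of_derivative_eq_of_eval_zero_eq_s8 {R : Type*} [Ring R] [IsAddTorsionFree R] {p q : R[X]}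
    (hd : derivative p = derivative q) (h0 : p.eval 0 = q.eval 0) : p = q := by
  have hC := eq_C_of_derivative_eq_zero (p := p - q) (by rw [derivative_sub, hd, sub_self])
  rwa [coeff_zero_eq_eval_zero, eval_sub, h0, sub_self, map_zero, sub_eq_zero] at hC

variable {R : Type*} [CommRing R] (a : R)

noncomputable def abel : ℕ → R[X]
  | 0 => 1
  | n + 1 => X * (X - C (a * (n + 1))) ^ n

@[simp]
theorem abel_zero : abel a 0 = 1 := rfl

theorem eval_abel_of_ne_zero {n : ℕ} (hn : n ≠ 0) (x : R) :
    (abel a n).eval x = x * (x - a * n) ^ (n - 1) := by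
  obtain ⟨m, rfl⟩ := Nat.exists_eq_succ_of_ne_zero hn
  simp [abel]

@[simp]
theorem eval_zero_abel_succ (n : ℕ) : (abel a (n + 1)).eval 0 = 0 := by
  simp [abel]

theorem derivative_abel_succ (n : ℕ) :
    derivative (abel a (n + 1)) = (n + 1) * (abel a n).comp (X - C a) := by
  rcases n with _ | m
  · simp [abel]
  · simp only [abel, derivative_mul, derivative_X, derivative_pow, derivative_sub, derivative_C,
      mul_comp, X_comp, sub_comp, C_comp, pow_comp]
    push_cast
    simp only [map_mul, map_add, map_one, map_natCast]
    ring

theorem abel_comp_X_add_C [IsAddTorsionFree R] (n : ℕ) (y : R) :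
    (abel a n).comp (X + C y) =
      ∑ p ∈ antidiagonal n, (n.choose p.1 : R[X]) * abel a p.1 * C ((abel a p.2).eval y) := by
  induction n with
  | zero => simp
  | succ n ih =>
    apply eq_of_derivative_eq_of_eval_zero_eq_s8
    · have hshift : (X - C a).comp (X + C y) = (X + C y).comp (X - C a) := by
        simp only [sub_comp, add_comp, X_comp, C_comp]
        ring
      rw [derivative_comp, derivative_abel_succ, mul_comp, comp_assoc, hshift, ← comp_assoc, ih,
        derivative_sum, Nat.sum_antidiagonal_succ, sum_comp, mul_sum]
      simp only [derivative_add, derivative_X, derivative_C, add_zero, one_mul, natCast_comp,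
        add_comp, one_comp, abel_zero, mul_one, derivative_mul, derivative_natCast, zero_mul,
        mul_zero, derivative_abel_succ, mul_comp, C_comp, zero_add]
      refine sum_congr rfl fun p _ => ?_
      have hchoose := congrArg (Nat.cast : ℕ → R[X]) (Nat.add_one_mul_choose_eq n p.1)
      push_cast at hchoose
      linear_combination (abel a p.1).comp (X - C a) * C ((abel a p.2).eval y) * hchoose
    · simp [eval_comp, Nat.sum_antidiagonal_succ, eval_finsetSum]

theorem abel_eval_add [IsAddTorsionFree R] (n : ℕ) (x y : R) :
    (abel a n).eval (x + y) =
      ∑ p ∈ antidiagonal n, n.choose p.1 * (abel a p.1).eval x * (abel a p.2).eval y := by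
  simpa [eval_comp, eval_finsetSum, add_comm] using congrArg (eval x) (abel_comp_X_add_C a n y)

end Polynomial

open Polynomial in
theorem abel_hurwitz_succ {R : Type*} [CommRing R] [IsAddTorsionFree R] (n : ℕ) (x y : R) :
    (x + y) * (x + y + (n + 1 : ℕ)) ^ n =
      x * (x + (n + 1 : ℕ)) ^ n + y * (y + (n + 1 : ℕ)) ^ n +
        x * y * ∑ j ∈ Icc 1 n,
          ((n + 1).choose j : R) * (x + j) ^ (j - 1) * (y + (n + 1 - j : ℕ)) ^ (n + 1 - j - 1) := by
  have key := abel_eval_add (-1) (n + 1) x y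
  simp only [Finset.Nat.sum_antidiagonal_succ_eq_add_add_sum_Icc, abel_zero, eval_one,
    eval_abel_of_ne_zero _ (Nat.add_one_ne_zero n), Nat.choose_zero_right, Nat.choose_self,
    neg_one_mul, sub_neg_eq_add, Nat.cast_one, one_mul, mul_one, Nat.add_sub_cancel] at key
  have hsum : ∀ j ∈ Icc 1 n,
      ((n + 1).choose j : R) * (abel (-1) j).eval x * (abel (-1) (n + 1 - j)).eval y =
        x * y * ((n + 1).choose j * (x + j) ^ (j - 1) * (y + (n + 1 - j : ℕ)) ^ (n + 1 - j - 1)) := by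
    intro j hj
    have hj := mem_Icc.mp hj
    rw [eval_abel_of_ne_zero _ (by omega), eval_abel_of_ne_zero _ (by omega)]
    simp only [neg_one_mul, sub_neg_eq_add]
    ring
  rw [key, sum_congr rfl hsum, ← mul_sum]
  ring

open Finset MvPolynomial

theorem abel_hurwitz_general (n : ℕ) :
    ((X 0 : MvPolynomial (Fin 2) ℚ) + X 1) * (X 0 + X 1 + (n : MvPolynomial (Fin 2) ℚ)) ^ (n - 1) =
      X 0 * (X 0 + (n : MvPolynomial (Fin 2) ℚ)) ^ (n - 1) +
        X 1 * (X 1 + (n : MvPolynomial (Fin 2) ℚ)) ^ (n - 1) +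
        X 0 * X 1 *
          ∑ j ∈ Finset.Icc 1 (n - 1),
            ((Nat.choose n j : ℕ) : MvPolynomial (Fin 2) ℚ) *
              (X 0 + (j : MvPolynomial (Fin 2) ℚ)) ^ (j - 1) *
              (X 1 + ((n - j : ℕ) : MvPolynomial (Fin 2) ℚ)) ^ (n - j - 1) := by
  rcases n with _ | n
  · simp
  · simpa using abel_hurwitz_succ n (X 0 : MvPolynomial (Fin 2) ℚ) (X 1)

/-- The classical Abel–Hurwitz binomial identity, obtained from Hurwitz's identity by setting
`z_1 = ⋯ = z_n = 1`: for `n ≥ 1`, as polynomials in `x = X 0` and `y = X 1` over `ℚ`,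
`(x+y)(x+y+n)^{n-1} = x(x+n)^{n-1} + y(y+n)^{n-1}
   + xy ∑_{j=1}^{n-1} C(n,j)(x+j)^{j-1}(y+n-j)^{n-j-1}`. -/
theorem abel_hurwitz (n : ℕ) (hn : 1 ≤ n) :
    ((X 0 : MvPolynomial (Fin 2) ℚ) + X 1) * (X 0 + X 1 + (n : MvPolynomial (Fin 2) ℚ)) ^ (n - 1) =
      X 0 * (X 0 + (n : MvPolynomial (Fin 2) ℚ)) ^ (n - 1) +
        X 1 * (X 1 + (n : MvPolynomial (Fin 2) ℚ)) ^ (n - 1) +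
        X 0 * X 1 *
          ∑ j ∈ Finset.Icc 1 (n - 1),
            ((Nat.choose n j : ℕ) : MvPolynomial (Fin 2) ℚ) *
              (X 0 + (j : MvPolynomial (Fin 2) ℚ)) ^ (j - 1) *
              (X 1 + ((n - j : ℕ) : MvPolynomial (Fin 2) ℚ)) ^ (n - j - 1) :=
  abel_hurwitz_general n
end

section
/- If a sequence of formal power series \phi_n(z_1,...,z_n) \in \mathbb{Q}[[\varepsilon]][[z_1,...,z_n]] satisfies \phi_1(z) = \log\left(\frac{\varepsilon z/2}{\sinh(\varepsilon z/2)}\right) and the differential recursion \frac{\partial}{\partial z_i} \phi_n(z_1,...,z_n) = \sum_{I \ni i, I \ne \{1,...,n\}} (Z - Z_I)^{n-|I|-1} \phi_{|I|}(z_I) + Z^{n-2}\left(1 - \frac{\varepsilon Z/2}{\tanh(\varepsilon Z/2)}\right) for all i and n \ge 2, together with \phi_n(0,...,0) = 0, then \phi_2(z_1, z_2) = -\sum_{k=2}^\infty \frac{\varepsilon^k B_k}{k!}\left(\frac{(z_1+z_2)^{k+1}}{k+1} + \frac{z_1^{k+1} + z_2^{k+1}}{k(k+1)}\right). -/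
open Nat Finset PowerSeries

noncomputable section


/-- The coefficient ring `ℚ[[ε]]`. -/
abbrev Rε : Type := PowerSeries ℚ

/-- Formal partial derivative `∂/∂z_i` of a power series in `z_1, z_2`. -/
def pderiv2 (i : Fin 2) (F : MvPowerSeries (Fin 2) Rε) : MvPowerSeries (Fin 2) Rε :=
  fun d => ((d i + 1 : ℕ) : Rε) * F (d + Finsupp.single i 1)

/-- The one-variable series `sinh(εz/2)/(εz/2) ∈ ℚ[[ε]][[z]]`: the coefficient of `z^k`
(for even `k`) is `ε^k/(2^k (k+1)!)`. -/
def shEps : PowerSeries Rε :=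
  PowerSeries.mk fun k =>
    if k % 2 = 0 then (PowerSeries.X : Rε) ^ k *
      PowerSeries.C (R := ℚ) (((2 ^ k * Nat.factorial (k + 1) : ℕ) : ℚ)⁻¹) else 0

/-- `ε` as a constant of `ℚ[[ε]][[z_1,z_2]]`. -/
def eps2 : MvPowerSeries (Fin 2) Rε := MvPowerSeries.C (σ := Fin 2) (R := Rε) PowerSeries.X

/-- `Z = z_1 + z_2`. -/
def Z2 : MvPowerSeries (Fin 2) Rε := MvPowerSeries.X 0 + MvPowerSeries.X 1

/-- `sinh(εZ/2)/(εZ/2) ∈ ℚ[[ε]][[z_1,z_2]]` (truncated sum = full sum coefficientwise). -/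
def shZ2 : MvPowerSeries (Fin 2) Rε := fun d =>
  ∑ m ∈ Finset.range (d 0 + d 1 + 1),
    MvPowerSeries.coeff (R := Rε) d
      (eps2 ^ (2 * m) * Z2 ^ (2 * m) *
        MvPowerSeries.C (σ := Fin 2) (R := Rε)
          (PowerSeries.C (R := ℚ) (((2 ^ (2 * m) * Nat.factorial (2 * m + 1) : ℕ) : ℚ)⁻¹)))

/-- `cosh(εZ/2) ∈ ℚ[[ε]][[z_1,z_2]]` (truncated sum = full sum coefficientwise). -/
def chZ2 : MvPowerSeries (Fin 2) Rε := fun d =>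
  ∑ m ∈ Finset.range (d 0 + d 1 + 1),
    MvPowerSeries.coeff (R := Rε) d
      (eps2 ^ (2 * m) * Z2 ^ (2 * m) *
        MvPowerSeries.C (σ := Fin 2) (R := Rε)
          (PowerSeries.C (R := ℚ) (((2 ^ (2 * m) * Nat.factorial (2 * m) : ℕ) : ℚ)⁻¹)))

/-- The inclusion `ℚ[[ε]][[z]] → ℚ[[ε]][[z_1,z_2]]` sending `z` to `z_i`. -/
def emb2 (i : Fin 2) (p : PowerSeries Rε) : MvPowerSeries (Fin 2) Rε :=
  fun d => if d = Finsupp.single i (d i) then PowerSeries.coeff (R := Rε) (d i) p else 0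

/-- The claimed value of `f_1[z_1,z_2]`:
`-∑_{k≥2} (ε^k B_k/k!)((z_1+z_2)^{k+1}/(k+1) + (z_1^{k+1}+z_2^{k+1})/(k(k+1)))`. -/
def f1TwoPoint : MvPowerSeries (Fin 2) Rε := fun d =>
  ∑ k ∈ Finset.Icc 2 (d 0 + d 1),
    MvPowerSeries.coeff (R := Rε) d
      (-(MvPowerSeries.C (σ := Fin 2) (R := Rε)
            ((PowerSeries.X : Rε) ^ k * PowerSeries.C (R := ℚ) (bernoulli k / (Nat.factorial k : ℚ)))) *
        (Z2 ^ (k + 1) * MvPowerSeries.C (σ := Fin 2) (R := Rε) (PowerSeries.C (R := ℚ) (((k : ℚ) + 1)⁻¹)) +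
          (MvPowerSeries.X 0 ^ (k + 1) + MvPowerSeries.X 1 ^ (k + 1)) *
            MvPowerSeries.C (σ := Fin 2) (R := Rε) (PowerSeries.C (R := ℚ) (((k : ℚ) * ((k : ℚ) + 1))⁻¹))))


/-!
The hypotheses determine `p1` and `W`: the equation for `p1` is a linear differential equation
with prescribed constant term, and `W` is a quotient by the unit `sinh(εZ/2)/(εZ/2)`. Both are
expressed through Bernoulli numbers, since `(z/2) coth(z/2) = z/(e^z - 1) + z/2` and
`z (log((z/2)/sinh(z/2)))' = 1 - (z/2) coth(z/2)`. A series in `z_1, z_2` is determined by its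
partial derivatives and its constant term, and the claimed value is
`G(z_1) + G(z_2) - H(z_1 + z_2)` with `G' = p1` and `H' = W - 1`, so its partial derivatives are
the right-hand sides of the recursion.
-/

namespace F1TwoPoint

/-! ### The one-variable series over `ℚ` -/

abbrev expScaled (a : ℚ) : ℚ⟦X⟧ := rescale a (exp ℚ)

/- The series of `sinh(z/2)/(z/2)`, `cosh(z/2)`, `(z/2) coth(z/2)` and `log((z/2)/sinh(z/2))`. -/

def sinhcHalf : ℚ⟦X⟧ := mk fun k =>
  if k % 2 = 0 then (((2 : ℕ) ^ k * (k + 1)! : ℕ) : ℚ)⁻¹ else 0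

def coshHalf : ℚ⟦X⟧ := mk fun k =>
  if k % 2 = 0 then (((2 : ℕ) ^ k * k ! : ℕ) : ℚ)⁻¹ else 0

def halfCoth : ℚ⟦X⟧ := mk fun k => if k = 1 then 0 else bernoulli k / k !

def logSinhc : ℚ⟦X⟧ := mk fun k => if 2 ≤ k then -(bernoulli k / (k * k !)) else 0

lemma coeff_expScaled (a : ℚ) (n : ℕ) : coeff n (expScaled a) = a ^ n / n ! := by
  simp [coeff_rescale, coeff_exp, div_eq_mul_inv]

lemma expScaled_ne_zero (a : ℚ) : expScaled a ≠ 0 := fun h => by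
  simpa [h] using coeff_expScaled a 0

lemma derivative_expScaled (a : ℚ) : d⁄dX ℚ (expScaled a) = C a * expScaled a := by
  ext n
  rw [coeff_derivative, coeff_C_mul, coeff_expScaled, coeff_expScaled, factorial_succ, pow_succ]
  push_cast
  field_simp

lemma X_mul_sinhcHalf : X * sinhcHalf = expScaled 2⁻¹ - expScaled (-2⁻¹) := by
  ext n
  rw [map_sub, coeff_expScaled, coeff_expScaled]
  rcases n with _ | m
  · simp
  rw [coeff_succ_X_mul, sinhcHalf, coeff_mk]
  rcases Nat.even_or_odd m with hm | hm
  · rw [if_pos (Nat.even_iff.mp hm), (Even.add_one hm).neg_pow, pow_succ]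
    push_cast
    field_simp
    rw [← mul_pow]
    norm_num
  · rw [if_neg (by rw [Nat.odd_iff] at hm; omega), (Odd.add_one hm).neg_pow]
    ring

lemma coshHalf_eq : coshHalf = C 2⁻¹ * (expScaled 2⁻¹ + expScaled (-2⁻¹)) := by
  ext n
  rw [coeff_C_mul, map_add, coeff_expScaled, coeff_expScaled, coshHalf, coeff_mk]
  rcases Nat.even_or_odd n with hn | hn
  · rw [if_pos (Nat.even_iff.mp hn), hn.neg_pow]
    push_cast
    field_simp
    rw [← mul_pow]
    norm_num
  · rw [if_neg (by rw [Nat.odd_iff] at hn; omega), hn.neg_pow]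
    ring

lemma halfCoth_eq : halfCoth = bernoulliPowerSeries ℚ + C 2⁻¹ * X := by
  ext n
  rw [map_add, coeff_C_mul, coeff_X, halfCoth, bernoulliPowerSeries, coeff_mk, coeff_mk]
  rcases n with _ | _ | n <;> norm_num [bernoulli_one]

lemma X_mul_derivative_logSinhc :
    X * d⁄dX ℚ logSinhc = 1 - C 2⁻¹ * X - bernoulliPowerSeries ℚ := by
  ext n
  rw [map_sub, map_sub, coeff_C_mul, coeff_X, coeff_one, bernoulliPowerSeries, coeff_mk,
    Algebra.algebraMap_self_apply]
  rcases n with _ | _ | n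
  · simp
  · simp [coeff_derivative, logSinhc, bernoulli_one]
    norm_num
  · rw [coeff_succ_X_mul, coeff_derivative, logSinhc, coeff_mk, if_pos (by omega)]
    push_cast
    field_simp
    ring

lemma bernoulliPowerSeries_mul_expScaled_sub :
    bernoulliPowerSeries ℚ * (expScaled 2⁻¹ - expScaled (-2⁻¹)) =
      X * expScaled (-2⁻¹) := by
  apply mul_right_cancel₀ (expScaled_ne_zero 2⁻¹)
  have hexp : expScaled 2⁻¹ * expScaled 2⁻¹ = exp ℚ := by
    rw [exp_mul_exp_eq_exp_add]; norm_num [rescale_one]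
  have hone : expScaled (-2⁻¹) * expScaled 2⁻¹ = 1 := by
    rw [exp_mul_exp_eq_exp_add]; norm_num [rescale_zero]
  calc bernoulliPowerSeries ℚ * (expScaled 2⁻¹ - expScaled (-2⁻¹)) * expScaled 2⁻¹
      = bernoulliPowerSeries ℚ * (exp ℚ - 1) := by rw [← hexp, ← hone]; ring
    _ = X := bernoulliPowerSeries_mul_exp_sub_one ℚ
    _ = X * expScaled (-2⁻¹) * expScaled 2⁻¹ := by rw [mul_assoc, hone, mul_one]

lemma C_two_inv_mul_two : (C 2⁻¹ : ℚ⟦X⟧) * 2 = 1 := by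
  rw [← map_ofNat C 2, ← map_mul]
  norm_num

lemma sinhcHalf_mul_halfCoth : sinhcHalf * halfCoth = coshHalf := by
  apply mul_left_cancel₀ (X_ne_zero (R := ℚ))
  rw [coshHalf_eq, halfCoth_eq, ← mul_assoc, X_mul_sinhcHalf]
  linear_combination
    bernoulliPowerSeries_mul_expScaled_sub - X * expScaled (-2⁻¹) * C_two_inv_mul_two

lemma sinhcHalf_mul_derivative_logSinhc :
    sinhcHalf * d⁄dX ℚ logSinhc = -d⁄dX ℚ sinhcHalf := by
  apply mul_left_cancel₀ (X_ne_zero (R := ℚ))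
  apply mul_left_cancel₀ (X_ne_zero (R := ℚ))
  have hD : X * (X * -d⁄dX ℚ sinhcHalf) = X * sinhcHalf - X * d⁄dX ℚ (X * sinhcHalf) := by
    rw [Derivation.leibniz, derivative_X, smul_eq_mul, smul_eq_mul]
    ring
  calc X * (X * (sinhcHalf * d⁄dX ℚ logSinhc))
      = (X * sinhcHalf) * (X * d⁄dX ℚ logSinhc) := by ring
    _ = X * (X * -d⁄dX ℚ sinhcHalf) := by
      rw [hD, X_mul_sinhcHalf, X_mul_derivative_logSinhc, map_sub, derivative_expScaled,
        derivative_expScaled, map_neg]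
      linear_combination
        -bernoulliPowerSeries_mul_expScaled_sub + X * expScaled (-2⁻¹) * C_two_inv_mul_two


/-! ### Substituting `εz` -/

instance : CharZero Rε := RingHom.charZero (constantCoeff (R := ℚ))

def scaleByEps : ℚ⟦X⟧ →+* PowerSeries Rε := (rescale (X : Rε)).comp (map (C (R := ℚ)))

lemma coeff_scaleByEps (f : ℚ⟦X⟧) (n : ℕ) :
    coeff n (scaleByEps f) = X ^ n * C (coeff n f) := by
  simp [scaleByEps, coeff_rescale]

lemma derivative_scaleByEps (f : ℚ⟦X⟧) :
    d⁄dX Rε (scaleByEps f) = C X * scaleByEps (d⁄dX ℚ f) := by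
  ext n : 1
  rw [coeff_derivative, coeff_C_mul, coeff_scaleByEps, coeff_scaleByEps, coeff_derivative,
    (C (R := ℚ)).map_mul, map_add, map_natCast, map_one, pow_succ]
  ring

lemma scaleByEps_X : scaleByEps X = C X * X := by
  simp [scaleByEps, rescale_X]

lemma derivative_X_mul_scaleByEps (f : ℚ⟦X⟧) :
    d⁄dX Rε (X * scaleByEps f) = scaleByEps (d⁄dX ℚ (X * f)) := by
  simp only [Derivation.leibniz, derivative_X, derivative_scaleByEps, smul_eq_mul, map_add,
    map_mul, scaleByEps_X, map_one]
  ring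

lemma shEps_eq : shEps = scaleByEps sinhcHalf := by
  ext n
  rw [coeff_scaleByEps, shEps, sinhcHalf, coeff_mk, coeff_mk]
  split_ifs <;> simp

lemma shEps_ne_zero : shEps ≠ 0 := fun h => by
  simpa [shEps] using congrArg (coeff 0) h

lemma eq_scaleByEps_logSinhc {p1 : PowerSeries Rε} (hp10 : constantCoeff p1 = 0)
    (hp1 : shEps * d⁄dX Rε p1 = -d⁄dX Rε shEps) : p1 = scaleByEps logSinhc := by
  have hsol : shEps * d⁄dX Rε (scaleByEps logSinhc) = -d⁄dX Rε shEps := by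
    rw [shEps_eq, derivative_scaleByEps, derivative_scaleByEps, mul_left_comm, ← map_mul,
      sinhcHalf_mul_derivative_logSinhc, map_neg, mul_neg]
  refine derivative.ext (mul_left_cancel₀ shEps_ne_zero (hp1.trans hsol.symm)) ?_
  rw [hp10, ← coeff_zero_eq_constantCoeff_apply, coeff_scaleByEps]
  simp [logSinhc]


/-! ### Substituting `z_1 + z_2` -/

lemma hasSubst_Z2 : HasSubst Z2 := HasSubst.of_constantCoeff_zero (by simp [Z2])

/- Bundled as a ring hom: since `Rε = ℚ⟦X⟧`, the type `Rε⟦X⟧ →ₐ[Rε] _` would be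
elaborated with `PowerSeries.algebraPowerSeries`, not the instance `substAlgHom` uses. -/
def substSum : PowerSeries Rε →+* MvPowerSeries (Fin 2) Rε :=
  (substAlgHom (R := Rε) hasSubst_Z2 : PowerSeries Rε →+* MvPowerSeries (Fin 2) Rε)

lemma eq_single_add_single_iff {d : Fin 2 →₀ ℕ} {a b : ℕ} :
    d = Finsupp.single 0 a + Finsupp.single 1 b ↔ (d 0, d 1) = (a, b) := by
  simp [Finsupp.ext_iff, Fin.forall_fin_two]

lemma coeff_Z2_pow (d : Fin 2 →₀ ℕ) (k : ℕ) :
    MvPowerSeries.coeff d (Z2 ^ k) =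
      if d 0 + d 1 = k then ((k.choose (d 0) : ℕ) : Rε) else 0 := by
  rw [Z2, (Commute.all (MvPowerSeries.X 0 : MvPowerSeries (Fin 2) Rε) _).add_pow']
  simp only [map_sum, map_nsmul, MvPowerSeries.X_pow_eq, MvPowerSeries.monomial_mul_monomial,
    MvPowerSeries.coeff_monomial, eq_single_add_single_iff, Prod.mk.eta, smul_ite, smul_zero]
  simp only [Finset.sum_ite_eq, HasAntidiagonal.mem_antidiagonal, mul_one, nsmul_eq_mul]

lemma coeff_substSum (f : PowerSeries Rε) (d : Fin 2 →₀ ℕ) :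
    MvPowerSeries.coeff d (substSum f) =
      ((d 0 + d 1).choose (d 0) : ℕ) * coeff (d 0 + d 1) f := by
  rw [substSum, RingHom.coe_coe, coe_substAlgHom, coeff_subst hasSubst_Z2,
    finsum_eq_single _ (d 0 + d 1) fun k hk => by rw [coeff_Z2_pow, if_neg hk.symm, smul_zero],
    coeff_Z2_pow, if_pos rfl, smul_eq_mul, mul_comm]

lemma substSum_ne_zero {f : PowerSeries Rε} (hf : constantCoeff f ≠ 0) : substSum f ≠ 0 :=
  fun h => hf (by simpa [coeff_substSum] using congrArg (MvPowerSeries.coeff 0) h)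

lemma sum_range_ite_eq_two_mul {M : Type*} [AddCommMonoid M] (n : ℕ) (f : ℕ → M) :
    ∑ m ∈ range (n + 1), (if n = 2 * m then f (2 * m) else 0) =
      if n % 2 = 0 then f n else 0 := by
  split_ifs with hn
  · obtain ⟨j, rfl⟩ : ∃ j, n = 2 * j := ⟨n / 2, by omega⟩
    rw [Finset.sum_eq_single j (fun m _ hm => if_neg (by omega)) (fun h => by simp at h; omega),
      if_pos rfl]
  · exact Finset.sum_eq_zero fun m _ => if_neg (by omega)

lemma coeff_eps2_pow_mul_Z2_pow_mul_C (k : ℕ) (c : Rε) (d : Fin 2 →₀ ℕ) :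
    MvPowerSeries.coeff d (eps2 ^ k * Z2 ^ k * MvPowerSeries.C c) =
      if d 0 + d 1 = k then ((k.choose (d 0) : ℕ) : Rε) * (X ^ k * c) else 0 := by
  rw [eps2, ← map_pow, mul_right_comm, ← map_mul, MvPowerSeries.coeff_C_mul, coeff_Z2_pow]
  split_ifs <;> ring

lemma sum_even_eq_coeff_substSum (a : ℕ → ℚ) (d : Fin 2 →₀ ℕ) :
    ∑ m ∈ range (d 0 + d 1 + 1), MvPowerSeries.coeff d
      (eps2 ^ (2 * m) * Z2 ^ (2 * m) * MvPowerSeries.C (C (a (2 * m)))) =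
      MvPowerSeries.coeff d
        (substSum (scaleByEps (mk fun k => if k % 2 = 0 then a k else 0))) := by
  simp_rw [coeff_eps2_pow_mul_Z2_pow_mul_C]
  rw [sum_range_ite_eq_two_mul _ fun k => ((k.choose (d 0) : ℕ) : Rε) * (X ^ k * C (a k)),
    coeff_substSum, coeff_scaleByEps, coeff_mk]
  split_ifs <;> simp

lemma shZ2_eq : shZ2 = substSum (scaleByEps sinhcHalf) := by
  ext d : 1
  exact sum_even_eq_coeff_substSum (fun k => (((2 : ℕ) ^ k * (k + 1)! : ℕ) : ℚ)⁻¹) d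

lemma chZ2_eq : chZ2 = substSum (scaleByEps coshHalf) := by
  ext d : 1
  exact sum_even_eq_coeff_substSum (fun k => (((2 : ℕ) ^ k * k ! : ℕ) : ℚ)⁻¹) d

lemma eq_substSum_halfCoth {W : MvPowerSeries (Fin 2) Rε} (hW : shZ2 * W = chZ2) :
    W = substSum (scaleByEps halfCoth) := by
  have hsol : shZ2 * substSum (scaleByEps halfCoth) = chZ2 := by
    rw [shZ2_eq, chZ2_eq, ← map_mul, ← map_mul, sinhcHalf_mul_halfCoth]
  refine mul_left_cancel₀ ?_ (hW.trans hsol.symm)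
  rw [shZ2_eq]
  exact substSum_ne_zero
    (by simp [← coeff_zero_eq_constantCoeff_apply, coeff_scaleByEps, sinhcHalf])


/-! ### Substituting a single variable -/

def substVar (i : Fin 2) : PowerSeries Rε →+* MvPowerSeries (Fin 2) Rε :=
  (substAlgHom (R := Rε) (HasSubst.X (S := Rε) i) :
    PowerSeries Rε →+* MvPowerSeries (Fin 2) Rε)

lemma coeff_substVar (i : Fin 2) (p : PowerSeries Rε) (d : Fin 2 →₀ ℕ) :
    MvPowerSeries.coeff d (substVar i p) =
      if d = Finsupp.single i (d i) then coeff (d i) p else 0 := by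
  rw [substVar, RingHom.coe_coe, coe_substAlgHom, coeff_subst_single]

lemma emb2_eq_substVar (i : Fin 2) (p : PowerSeries Rε) : emb2 i p = substVar i p := by
  ext d : 1
  rw [coeff_substVar]
  rfl

lemma coeff_substVar_congr (i : Fin 2) {p q : PowerSeries Rε} {d : Fin 2 →₀ ℕ}
    (h : coeff (d 0 + d 1) p = coeff (d 0 + d 1) q) :
    MvPowerSeries.coeff d (substVar i p) = MvPowerSeries.coeff d (substVar i q) := by
  rw [coeff_substVar, coeff_substVar]
  split_ifs with hd
  · rw [hd] at h
    fin_cases i <;> simpa using h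
  · rfl

/-! ### Partial derivatives -/

lemma coeff_pderiv2 (i : Fin 2) (F : MvPowerSeries (Fin 2) Rε) (d : Fin 2 →₀ ℕ) :
    MvPowerSeries.coeff d (pderiv2 i F) =
      (d i + 1 : ℕ) * MvPowerSeries.coeff (d + Finsupp.single i 1) F :=
  rfl

lemma pderiv2_add (i : Fin 2) (F G : MvPowerSeries (Fin 2) Rε) :
    pderiv2 i (F + G) = pderiv2 i F + pderiv2 i G := by
  ext d : 1
  simp only [coeff_pderiv2, map_add, mul_add]

lemma pderiv2_sub (i : Fin 2) (F G : MvPowerSeries (Fin 2) Rε) :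
    pderiv2 i (F - G) = pderiv2 i F - pderiv2 i G := by
  ext d : 1
  simp only [coeff_pderiv2, map_sub, mul_sub]

lemma ext_pderiv2 {F G : MvPowerSeries (Fin 2) Rε} (h : ∀ i, pderiv2 i F = pderiv2 i G)
    (h0 : MvPowerSeries.constantCoeff F = MvPowerSeries.constantCoeff G) : F = G := by
  ext d : 1
  rcases eq_or_ne d 0 with rfl | hd
  · exact h0
  obtain ⟨i, hi⟩ := Finsupp.ne_iff.mp hd
  obtain ⟨d', rfl⟩ : ∃ d', d = d' + Finsupp.single i 1 :=
    ⟨d - Finsupp.single i 1, (tsub_add_cancel_of_le (Finsupp.single_le_iff.mpr (by simpa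
      [Nat.one_le_iff_ne_zero] using hi))).symm⟩
  have hd' := congrArg (MvPowerSeries.coeff d') (h i)
  rw [coeff_pderiv2, coeff_pderiv2] at hd'
  exact mul_left_cancel₀ (Nat.cast_ne_zero.mpr (Nat.succ_ne_zero _)) hd'

lemma pderiv2_substSum (i : Fin 2) (f : PowerSeries Rε) :
    pderiv2 i (substSum f) = substSum (d⁄dX Rε f) := by
  ext d : 1
  set e : Fin 2 →₀ ℕ := d + Finsupp.single i 1 with he
  have hsum : e 0 + e 1 = d 0 + d 1 + 1 := by
    fin_cases i <;> simp [he] <;> ring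
  have hchoose : ((d i + 1 : ℕ) : Rε) * ((d 0 + d 1 + 1).choose (e 0) : ℕ) =
      ((d 0 + d 1).choose (d 0) : ℕ) * ((d 0 + d 1 : ℕ) + 1) := by
    fin_cases i
    · simp [he]
      have h := Nat.add_one_mul_choose_eq (d 0 + d 1) (d 0)
      exact_mod_cast by linarith
    · have h := Nat.choose_mul_succ_eq (d 0 + d 1) (d 0)
      rw [show d 0 + d 1 + 1 - d 0 = d 1 + 1 by omega] at h
      simp [he]
      exact_mod_cast by linarith
  rw [coeff_pderiv2, coeff_substSum, coeff_substSum, coeff_derivative, hsum]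
  linear_combination coeff (d 0 + d 1 + 1) f * hchoose

lemma pderiv2_substVar_self (i : Fin 2) (p : PowerSeries Rε) :
    pderiv2 i (substVar i p) = substVar i (d⁄dX Rε p) := by
  ext d : 1
  rw [coeff_pderiv2, coeff_substVar, coeff_substVar, coeff_derivative, Finsupp.add_apply,
    Finsupp.single_eq_same, Finsupp.single_add]
  simp only [add_left_inj]
  split_ifs <;> push_cast <;> ring

lemma pderiv2_substVar_of_ne {i j : Fin 2} (hij : i ≠ j) (p : PowerSeries Rε) :
    pderiv2 i (substVar j p) = 0 := by
  ext d : 1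
  rw [coeff_pderiv2, coeff_substVar, map_zero, if_neg, mul_zero]
  intro h
  simpa [hij] using DFunLike.congr_fun h i

lemma pderiv2_substVar_add_substVar (i : Fin 2) (p : PowerSeries Rε) :
    pderiv2 i (substVar 0 p + substVar 1 p) = substVar i (d⁄dX Rε p) := by
  fin_cases i <;> simp [pderiv2_add, pderiv2_substVar_self, pderiv2_substVar_of_ne]

/-! ### The claimed value as `G(z_1) + G(z_2) - H(z_1 + z_2)` -/

def halfCothTail : ℚ⟦X⟧ :=
  mk fun k => if 2 ≤ k then bernoulli k / k ! * ((k : ℚ) + 1)⁻¹ else 0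

def logSinhcTail : ℚ⟦X⟧ :=
  mk fun k => if 2 ≤ k then -(bernoulli k / k ! * ((k : ℚ) * (k + 1))⁻¹) else 0

lemma coeff_derivative_X_mul {R : Type*} [CommSemiring R] (f : R⟦X⟧) (n : ℕ) :
    coeff n (d⁄dX R (X * f)) = (n + 1) * coeff n f := by
  rw [coeff_derivative, coeff_succ_X_mul, mul_comm]

lemma derivative_X_mul_halfCothTail : d⁄dX ℚ (X * halfCothTail) = halfCoth - 1 := by
  ext n
  rw [coeff_derivative_X_mul, map_sub, coeff_one, halfCothTail, halfCoth, coeff_mk, coeff_mk]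
  rcases n with _ | _ | n
  · simp
  · simp
  · rw [if_pos (by omega), if_neg (by omega), if_neg (by omega)]
    field_simp
    ring

lemma derivative_X_mul_logSinhcTail : d⁄dX ℚ (X * logSinhcTail) = logSinhc := by
  ext n
  rw [coeff_derivative_X_mul, logSinhcTail, logSinhc, coeff_mk, coeff_mk]
  split_ifs
  · field_simp
  · simp

lemma substSum_monomial (m : ℕ) (a : Rε) :
    substSum (monomial m a) = MvPowerSeries.C a * Z2 ^ m := by
  rw [monomial_eq_C_mul_X_pow, map_mul, map_pow, substSum, RingHom.coe_coe, coe_substAlgHom,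
    subst_C, subst_X hasSubst_Z2]

lemma substVar_monomial (i : Fin 2) (m : ℕ) (a : Rε) :
    substVar i (monomial m a) = MvPowerSeries.C a * MvPowerSeries.X i ^ m := by
  rw [monomial_eq_C_mul_X_pow, map_mul, map_pow, substVar, RingHom.coe_coe, coe_substAlgHom,
    subst_C, subst_X (HasSubst.X i)]

def f1Summand (k : ℕ) : MvPowerSeries (Fin 2) Rε :=
  -MvPowerSeries.C (X ^ k * C (bernoulli k / k !)) *
    (Z2 ^ (k + 1) * MvPowerSeries.C (C ((k : ℚ) + 1)⁻¹) +
      (MvPowerSeries.X 0 ^ (k + 1) + MvPowerSeries.X 1 ^ (k + 1)) *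
        MvPowerSeries.C (C ((k : ℚ) * ((k : ℚ) + 1))⁻¹))

lemma coeff_f1TwoPoint (d : Fin 2 →₀ ℕ) :
    MvPowerSeries.coeff d f1TwoPoint =
      ∑ k ∈ Icc 2 (d 0 + d 1), MvPowerSeries.coeff d (f1Summand k) :=
  rfl

lemma f1Summand_eq (k : ℕ) :
    f1Summand k =
      substVar 0 (monomial (k + 1) (X ^ k * C (-(bernoulli k / k ! * (k * (k + 1 : ℚ))⁻¹)))) +
      substVar 1 (monomial (k + 1) (X ^ k * C (-(bernoulli k / k ! * (k * (k + 1 : ℚ))⁻¹)))) -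
      substSum (monomial (k + 1) (X ^ k * C (bernoulli k / k ! * ((k : ℚ) + 1)⁻¹))) := by
  rw [f1Summand, substVar_monomial, substVar_monomial, substSum_monomial]
  simp only [map_mul, map_neg]
  ring

lemma coeff_sum_Icc_monomial (c : ℕ → ℚ) (n : ℕ) :
    coeff n (∑ k ∈ Icc 2 n, monomial (k + 1) (X ^ k * C (c k)) : PowerSeries Rε) =
      coeff n (X * scaleByEps (mk fun k => if 2 ≤ k then c k else 0)) := by
  rcases n with _ | m
  · simp
  rw [coeff_succ_X_mul, coeff_scaleByEps, coeff_mk, map_sum]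
  simp only [coeff_monomial, add_left_inj, Finset.sum_ite_eq, Finset.mem_Icc]
  split_ifs <;> simp_all

lemma f1TwoPoint_eq :
    f1TwoPoint =
      substVar 0 (X * scaleByEps logSinhcTail) + substVar 1 (X * scaleByEps logSinhcTail) -
        substSum (X * scaleByEps halfCothTail) := by
  ext d : 1
  rw [coeff_f1TwoPoint]
  simp_rw [f1Summand_eq]
  rw [← map_sum (MvPowerSeries.coeff d), Finset.sum_sub_distrib, Finset.sum_add_distrib,
    ← map_sum (substVar 0), ← map_sum (substVar 1), ← map_sum substSum, map_sub, map_add,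
    map_sub, map_add, coeff_substVar_congr 0 (coeff_sum_Icc_monomial _ _),
    coeff_substVar_congr 1 (coeff_sum_Icc_monomial _ _), coeff_substSum, coeff_substSum,
    coeff_sum_Icc_monomial]
  rfl

end F1TwoPoint

open F1TwoPoint

/-- Computation of `f_1[z_1,z_2]` from the recursion of Theorem 4.1 of
Getzler–Okounkov–Pandharipande.  Suppose `p1(z) = log((εz/2)/sinh(εz/2))`, characterized as
the series with zero constant term satisfying `Sh·p1' = -Sh'` for `Sh = sinh(εz/2)/(εz/2)`;
let `W = (εZ/2)/tanh(εZ/2)`, characterized by `sinh(εZ/2)/(εZ/2) · W = cosh(εZ/2)`; and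
suppose `p2` satisfies `p2(0,0) = 0` and the `n = 2` differential recursion
`∂p2/∂z_i = p1(z_i) + Z⁰(1 - (εZ/2)/tanh(εZ/2))` for `i = 1, 2` (the sum over `I ∋ i`,
`I ≠ {1,2}` has the single term `I = {i}`, contributing `(Z-Z_I)⁰ p1(z_i)`).  Then
`p2 = -∑_{k≥2} (ε^k B_k/k!)((z_1+z_2)^{k+1}/(k+1) + (z_1^{k+1}+z_2^{k+1})/(k(k+1)))`. -/
theorem f1_two_point (p1 : PowerSeries Rε) (p2 W : MvPowerSeries (Fin 2) Rε)
    (hp10 : PowerSeries.constantCoeff (R := Rε) p1 = 0)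
    (hp1 : shEps * (d⁄dX Rε) p1 = -(d⁄dX Rε) shEps)
    (hW : shZ2 * W = chZ2)
    (hrec : ∀ i : Fin 2, pderiv2 i p2 = emb2 i p1 + (1 - W))
    (h0 : MvPowerSeries.constantCoeff (σ := Fin 2) (R := Rε) p2 = 0) :
    p2 = f1TwoPoint := by
  refine ext_pderiv2 (fun i => ?_) ?_
  · rw [hrec i, f1TwoPoint_eq, pderiv2_sub, pderiv2_substVar_add_substVar, pderiv2_substSum,
      derivative_X_mul_scaleByEps, derivative_X_mul_scaleByEps, derivative_X_mul_logSinhcTail,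
      derivative_X_mul_halfCothTail, map_sub, map_one, map_sub, map_one, emb2_eq_substVar,
      eq_scaleByEps_logSinhc hp10 hp1, eq_substSum_halfCoth hW]
    ring
  · rw [h0, ← MvPowerSeries.coeff_zero_eq_constantCoeff_apply, coeff_f1TwoPoint]
    simp

end
end

section
/- For n \ge 1 and i \ge 1, and for each k \in \{1,...,n\}, \sum_{I \subseteq \{1,...,n\}, 0<|I|<n, k \notin I} \binom{|I|-1}{i-1} Z_I^{|I|-i}(Z-Z_I)^{n-|I|-1} = \binom{n-1}{i} Z^{n-i-1}. -/
open Finset MvPolynomial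

section Hurwitz

variable {ι : Type*} [DecidableEq ι] {A : Type*} [CommRing A]

private lemma sdiff_eq_insert_sdiff {T I : Finset ι} {j : ι} (hj : j ∈ T) (hI : I ⊆ T.erase j) :
    T \ I = insert j ((T.erase j) \ I) := by
  ext a
  simp only [mem_sdiff, mem_insert, mem_erase]
  constructor
  · rintro ⟨haT, haI⟩
    by_cases h : a = j
    · exact Or.inl h
    · exact Or.inr ⟨⟨h, haT⟩, haI⟩
  · rintro (rfl | ⟨⟨_, haT⟩, haI⟩)
    · exact ⟨hj, fun h => (mem_erase.mp (hI h)).1 rfl⟩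
    · exact ⟨haT, haI⟩

private lemma sum_sdiff_x (x : ι → A) {T I : Finset ι} {j : ι} (hj : j ∈ T)
    (hI : I ⊆ T.erase j) :
    ∑ a ∈ T \ I, x a = x j + ∑ a ∈ (T.erase j) \ I, x a := by
  rw [sdiff_eq_insert_sdiff hj hI, sum_insert (by simp)]

private lemma mprime_eq_m (x : ι → A) (T : Finset ι) (u v : A) :
    ∑ I ∈ T.powerset.filter (· ≠ T),
      (u + ∑ j ∈ I, x j) ^ I.card * v * (v + ∑ j ∈ T \ I, x j) ^ (T.card - I.card - 1)
    = ∑ I ∈ T.powerset.filter (· ≠ ∅),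
      v * (v + ∑ j ∈ I, x j) ^ (I.card - 1) * (u + ∑ j ∈ T \ I, x j) ^ (T.card - I.card) := by
  refine Finset.sum_nbij' (fun I => T \ I) (fun I => T \ I) ?_ ?_ ?_ ?_ ?_
  · intro I hI
    simp only [mem_filter, mem_powerset] at hI ⊢
    refine ⟨sdiff_subset, ?_⟩
    intro h
    exact hI.2 (le_antisymm hI.1 (Finset.sdiff_eq_empty_iff_subset.mp h))
  · intro I hI
    simp only [mem_filter, mem_powerset] at hI ⊢
    refine ⟨sdiff_subset, ?_⟩
    intro h
    obtain ⟨a, ha⟩ := Finset.nonempty_iff_ne_empty.mpr hI.2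
    have : a ∈ T \ I := by rw [h]; exact hI.1 ha
    exact (mem_sdiff.mp this).2 ha
  · intro I hI
    simp only [mem_filter, mem_powerset] at hI
    exact Finset.sdiff_sdiff_eq_self hI.1
  · intro I hI
    simp only [mem_filter, mem_powerset] at hI
    exact Finset.sdiff_sdiff_eq_self hI.1
  · intro I hI
    simp only [mem_filter, mem_powerset] at hI
    have h1 : (T \ I).card = T.card - I.card := Finset.card_sdiff_of_subset hI.1
    have h2 : T \ (T \ I) = I := Finset.sdiff_sdiff_eq_self hI.1
    have h3 : T.card - (T \ I).card = I.card := by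
      rw [h1]; exact Nat.sub_sub_self (Finset.card_le_card hI.1)
    rw [h2, h3, h1]
    ring

/-- The Hurwitz identity. -/
theorem hurwitz_M (x : ι → A) (T : Finset ι) : ∀ u v : A,
    ∑ I ∈ T.powerset.filter (· ≠ ∅),
      u * (u + ∑ j ∈ I, x j) ^ (I.card - 1) * (v + ∑ j ∈ T \ I, x j) ^ (T.card - I.card)
    = (u + v + ∑ j ∈ T, x j) ^ T.card - (v + ∑ j ∈ T, x j) ^ T.card := by
  induction T using Finset.strongInduction with
  | _ T IH =>
  intro u v
  -- the auxiliary "N" identity for the same T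
  have hN : ∀ u v : A,
      u * v * ∑ I ∈ T.powerset.filter (fun I => I ≠ ∅ ∧ I ≠ T),
        (u + ∑ j ∈ I, x j) ^ (I.card - 1) * (v + ∑ j ∈ T \ I, x j) ^ (T.card - I.card - 1)
      = (u + v) * (u + v + ∑ j ∈ T, x j) ^ (T.card - 1)
        - u * (u + ∑ j ∈ T, x j) ^ (T.card - 1)
        - v * (v + ∑ j ∈ T, x j) ^ (T.card - 1) := by
    intro u v
    rcases T.eq_empty_or_nonempty with rfl | ⟨l, hl⟩
    · simp only [Finset.powerset_empty, Finset.card_empty, Finset.sum_empty,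
        Finset.filter_singleton, Finset.sum_empty]
      simp only [ne_eq, not_true_eq_false, and_false, if_false, Finset.sum_empty,
        Finset.sum_empty, mul_zero, Nat.zero_sub, pow_zero, add_zero, mul_one]
      ring
    · have hl' : l ∉ T.erase l := Finset.notMem_erase l T
      have hTcard : T.card = (T.erase l).card + 1 := by
        rw [Finset.card_erase_of_mem hl]
        have : 1 ≤ T.card := Finset.card_pos.mpr ⟨l, hl⟩
        omega
      have hsplit :
          ∑ I ∈ T.powerset.filter (fun I => I ≠ ∅ ∧ I ≠ T),
            (u + ∑ j ∈ I, x j) ^ (I.card - 1) * (v + ∑ j ∈ T \ I, x j) ^ (T.card - I.card - 1)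
          = (∑ I ∈ (T.erase l).powerset.filter (· ≠ ∅),
              (u + ∑ j ∈ I, x j) ^ (I.card - 1)
                * ((v + x l) + ∑ j ∈ (T.erase l) \ I, x j) ^ ((T.erase l).card - I.card))
            + (∑ I ∈ (T.erase l).powerset.filter (· ≠ T.erase l),
              ((u + x l) + ∑ j ∈ I, x j) ^ I.card
                * (v + ∑ j ∈ (T.erase l) \ I, x j) ^ ((T.erase l).card - I.card - 1)) := by
        rw [Finset.sum_filter, show T.powerset = (insert l (T.erase l)).powerset by
          rw [Finset.insert_erase hl]]
        rw [Finset.sum_powerset_insert hl']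
        congr 1
        · rw [Finset.sum_filter]
          apply Finset.sum_congr rfl
          intro I hI
          rw [Finset.mem_powerset] at hI
          have hInotT : I ≠ T := by
            rintro rfl
            exact hl' (hI hl)
          by_cases hIe : I = ∅
          · simp [hIe, hInotT]
          · simp only [hIe, hInotT, ne_eq, not_false_eq_true, and_self, if_true]
            rw [sum_sdiff_x x hl hI]
            rw [show T.card - I.card - 1 = (T.erase l).card - I.card by
              have := Finset.card_le_card hI
              rw [Finset.card_erase_of_mem hl] at *
              omega]
            ring_nf
        · rw [Finset.sum_filter]
          apply Finset.sum_congr rfl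
          intro J hJ
          rw [Finset.mem_powerset] at hJ
          have hlJ : l ∉ J := fun h => hl' (hJ h)
          have hne : insert l J ≠ ∅ := Finset.insert_ne_empty l J
          have hiff : insert l J = T ↔ J = T.erase l := by
            constructor
            · intro h
              rw [← h, Finset.erase_insert hlJ]
            · intro h
              rw [h, Finset.insert_erase hl]
          have hcard : (insert l J).card = J.card + 1 := Finset.card_insert_of_notMem hlJ
          have hsd : T \ insert l J = (T.erase l) \ J := by
            ext a
            simp only [mem_sdiff, mem_insert, mem_erase, not_or]
            tauto
          by_cases hJT : J = T.erase l
          · subst hJT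
            rw [Finset.insert_erase hl]
            simp
          · have hneT : insert l J ≠ T := fun h => hJT (hiff.mp h)
            simp only [hne, hneT, ne_eq, not_false_eq_true, and_self, if_true, hJT]
            rw [hsd, hcard, Finset.sum_insert hlJ]
            rw [show T.card - (J.card + 1) - 1 = (T.erase l).card - J.card - 1 by
              rw [Finset.card_erase_of_mem hl]; omega]
            rw [Nat.add_sub_cancel]
            ring_nf
      rw [hsplit, mul_add]
      have h1 : u * v * (∑ I ∈ (T.erase l).powerset.filter (· ≠ ∅),
            (u + ∑ j ∈ I, x j) ^ (I.card - 1)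
              * ((v + x l) + ∑ j ∈ (T.erase l) \ I, x j) ^ ((T.erase l).card - I.card))
          = v * ((u + (v + x l) + ∑ j ∈ T.erase l, x j) ^ (T.erase l).card
              - ((v + x l) + ∑ j ∈ T.erase l, x j) ^ (T.erase l).card) := by
        rw [← IH (T.erase l) (Finset.erase_ssubset hl) u (v + x l)]
        rw [Finset.mul_sum, Finset.mul_sum]
        apply Finset.sum_congr rfl
        intro I _
        ring
      have h2 : u * v * (∑ I ∈ (T.erase l).powerset.filter (· ≠ T.erase l),
            ((u + x l) + ∑ j ∈ I, x j) ^ I.card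
              * (v + ∑ j ∈ (T.erase l) \ I, x j) ^ ((T.erase l).card - I.card - 1))
          = u * ((v + (u + x l) + ∑ j ∈ T.erase l, x j) ^ (T.erase l).card
              - ((u + x l) + ∑ j ∈ T.erase l, x j) ^ (T.erase l).card) := by
        calc u * v * (∑ I ∈ (T.erase l).powerset.filter (· ≠ T.erase l),
              ((u + x l) + ∑ j ∈ I, x j) ^ I.card
                * (v + ∑ j ∈ (T.erase l) \ I, x j) ^ ((T.erase l).card - I.card - 1))
            = u * (∑ I ∈ (T.erase l).powerset.filter (· ≠ T.erase l),
              ((u + x l) + ∑ j ∈ I, x j) ^ I.card * v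
                * (v + ∑ j ∈ (T.erase l) \ I, x j) ^ ((T.erase l).card - I.card - 1)) := by
              rw [Finset.mul_sum, Finset.mul_sum]
              apply Finset.sum_congr rfl; intro I _; ring
          _ = u * (∑ I ∈ (T.erase l).powerset.filter (· ≠ ∅),
              v * (v + ∑ j ∈ I, x j) ^ (I.card - 1)
                * ((u + x l) + ∑ j ∈ (T.erase l) \ I, x j) ^ ((T.erase l).card - I.card)) := by
              rw [mprime_eq_m x (T.erase l) (u + x l) v]
          _ = u * ((v + (u + x l) + ∑ j ∈ T.erase l, x j) ^ (T.erase l).card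
              - ((u + x l) + ∑ j ∈ T.erase l, x j) ^ (T.erase l).card) := by
              rw [IH (T.erase l) (Finset.erase_ssubset hl) v (u + x l)]
      rw [h1, h2, ← Finset.add_sum_erase T x hl, hTcard]
      rw [Nat.add_sub_cancel]
      ring
  -- now the main identity
  rcases T.eq_empty_or_nonempty with rfl | hTne
  · simp [Finset.powerset_empty, Finset.filter_singleton]
  · have hTpos : 1 ≤ T.card := Finset.card_pos.mpr hTne
    have hTne' : T ≠ ∅ := Finset.nonempty_iff_ne_empty.mp hTne
    have hsplit : T.powerset.filter (· ≠ ∅)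
        = insert T (T.powerset.filter (fun I => I ≠ ∅ ∧ I ≠ T)) := by
      ext I
      simp only [mem_insert, mem_filter, mem_powerset, ne_eq]
      constructor
      · rintro ⟨h1, h2⟩
        by_cases h : I = T
        · exact Or.inl h
        · exact Or.inr ⟨h1, h2, h⟩
      · rintro (rfl | ⟨h1, h2, h3⟩)
        · exact ⟨le_refl _, hTne'⟩
        · exact ⟨h1, h2⟩
    rw [hsplit, Finset.sum_insert (by simp)]
    have htermT : u * (u + ∑ j ∈ T, x j) ^ (T.card - 1)
        * (v + ∑ j ∈ T \ T, x j) ^ (T.card - T.card)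
        = u * (u + ∑ j ∈ T, x j) ^ (T.card - 1) := by
      simp
    rw [htermT]
    have hexp : ∑ I ∈ T.powerset.filter (fun I => I ≠ ∅ ∧ I ≠ T),
        u * (u + ∑ j ∈ I, x j) ^ (I.card - 1) * (v + ∑ j ∈ T \ I, x j) ^ (T.card - I.card)
        = (∑ I ∈ T.powerset.filter (fun I => I ≠ ∅ ∧ I ≠ T),
            u * v * ((u + ∑ j ∈ I, x j) ^ (I.card - 1)
              * (v + ∑ j ∈ T \ I, x j) ^ (T.card - I.card - 1)))
          + (∑ I ∈ T.powerset.filter (fun I => I ≠ ∅ ∧ I ≠ T), ∑ j ∈ T \ I,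
              x j * (u * (u + ∑ j' ∈ I, x j') ^ (I.card - 1)
                * (v + ∑ j' ∈ T \ I, x j') ^ (T.card - I.card - 1))) := by
      rw [← Finset.sum_add_distrib]
      apply Finset.sum_congr rfl
      intro I hI
      simp only [mem_filter, mem_powerset] at hI
      have hlt : I.card < T.card :=
        Finset.card_lt_card (Finset.ssubset_iff_subset_ne.mpr ⟨hI.1, hI.2.2⟩)
      rw [show T.card - I.card = (T.card - I.card - 1) + 1 by omega]
      rw [pow_succ, Nat.add_sub_cancel, ← Finset.sum_mul]
      ring
    rw [hexp]
    rw [← Finset.mul_sum, hN u v]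
    have hswap : (∑ I ∈ T.powerset.filter (fun I => I ≠ ∅ ∧ I ≠ T), ∑ j ∈ T \ I,
              x j * (u * (u + ∑ j' ∈ I, x j') ^ (I.card - 1)
                * (v + ∑ j' ∈ T \ I, x j') ^ (T.card - I.card - 1)))
        = (∑ j ∈ T, x j) * ((u + v + ∑ j ∈ T, x j) ^ (T.card - 1)
            - (v + ∑ j ∈ T, x j) ^ (T.card - 1)) := by
      rw [Finset.sum_comm' (t' := T)
        (s' := fun j => (T.erase j).powerset.filter (· ≠ ∅)) ?_]
      · rw [Finset.sum_mul]
        apply Finset.sum_congr rfl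
        intro j hj
        have hTj : (T.erase j).card = T.card - 1 := Finset.card_erase_of_mem hj
        calc ∑ I ∈ (T.erase j).powerset.filter (· ≠ ∅),
              x j * (u * (u + ∑ j' ∈ I, x j') ^ (I.card - 1)
                * (v + ∑ j' ∈ T \ I, x j') ^ (T.card - I.card - 1))
            = x j * ∑ I ∈ (T.erase j).powerset.filter (· ≠ ∅),
              u * (u + ∑ j' ∈ I, x j') ^ (I.card - 1)
                * ((v + x j) + ∑ j' ∈ (T.erase j) \ I, x j') ^ ((T.erase j).card - I.card) := by
              rw [Finset.mul_sum]
              apply Finset.sum_congr rfl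
              intro I hI
              simp only [mem_filter, mem_powerset] at hI
              have hIc : I.card ≤ (T.erase j).card := Finset.card_le_card hI.1
              rw [sum_sdiff_x x hj hI.1]
              rw [show T.card - I.card - 1 = (T.erase j).card - I.card by
                rw [hTj] at hIc ⊢; omega]
              ring_nf
          _ = x j * ((u + (v + x j) + ∑ j' ∈ T.erase j, x j') ^ (T.erase j).card
              - ((v + x j) + ∑ j' ∈ T.erase j, x j') ^ (T.erase j).card) := by
              rw [IH (T.erase j) (Finset.erase_ssubset hj) u (v + x j)]
          _ = x j * ((u + v + ∑ j' ∈ T, x j') ^ (T.card - 1)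
              - (v + ∑ j' ∈ T, x j') ^ (T.card - 1)) := by
              rw [hTj, ← Finset.add_sum_erase T x hj]
              ring
      · intro I j
        simp only [mem_filter, mem_powerset, mem_sdiff, mem_erase, ne_eq]
        constructor
        · rintro ⟨⟨hIT, hIe, hInT⟩, hjT, hjI⟩
          refine ⟨⟨?_, hIe⟩, hjT⟩
          intro a ha
          exact Finset.mem_erase.mpr ⟨fun h => hjI (h ▸ ha), hIT ha⟩
        · rintro ⟨⟨hIT, hIe⟩, hjT⟩
          have hjI : j ∉ I := fun h => (Finset.mem_erase.mp (hIT h)).1 rfl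
          refine ⟨⟨fun a ha => Finset.mem_of_mem_erase (hIT ha), hIe, ?_⟩, hjT, hjI⟩
          rintro rfl
          exact hjI hjT
    rw [hswap]
    obtain ⟨m', hm'⟩ : ∃ m', T.card = m' + 1 := ⟨T.card - 1, by omega⟩
    rw [hm']
    simp only [Nat.add_sub_cancel]
    rw [pow_succ, pow_succ]
    ring

end Hurwitz

/-- The difference of identities (lqpp) and (lqppp) of Getzler–Okounkov–Pandharipande:
for `n ≥ 1`, `i ≥ 1` and each fixed `k ∈ {1,…,n}`,
`∑_{∅ ≠ I ⊊ {1,…,n}, k ∉ I} C(|I|-1,i-1) Z_I^{|I|-i} (Z-Z_I)^{n-|I|-1} = C(n-1,i) Z^{n-i-1}`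
as polynomials in `z_1, …, z_n` over `ℚ`. -/
theorem lqpp_sub_lqppp (n : ℕ) (hn : 1 ≤ n) (i : ℕ) (hi : 1 ≤ i) (k : Fin n) :
    ∑ I ∈ Finset.univ.powerset.filter
        (fun I : Finset (Fin n) => I ≠ ∅ ∧ I ≠ Finset.univ ∧ k ∉ I),
        ((Nat.choose (I.card - 1) (i - 1) : ℕ) : MvPolynomial (Fin n) ℚ) *
          (∑ j ∈ I, X j) ^ (I.card - i) *
          ((∑ j, X j) - ∑ j ∈ I, X j) ^ (n - I.card - 1) =
      ((Nat.choose (n - 1) i : ℕ) : MvPolynomial (Fin n) ℚ) * (∑ j, X j) ^ (n - i - 1) := by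
  classical
  set R := MvPolynomial (Fin n) ℚ with hR
  set T : Finset (Fin n) := Finset.univ.erase k with hT
  have hTcard : T.card = n - 1 := by
    rw [hT, Finset.card_erase_of_mem (Finset.mem_univ k), Finset.card_univ, Fintype.card_fin]
  have key := hurwitz_M (A := Polynomial R) (fun j => Polynomial.C (X j)) T
    Polynomial.X (Polynomial.C (X k))
  obtain ⟨i', rfl⟩ : ∃ i', i = i' + 1 := ⟨i - 1, by omega⟩
  have hZT : (X k : R) + ∑ j ∈ T, X j = ∑ j, X j := Finset.add_sum_erase _ _ (Finset.mem_univ k)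
  have hfilter : Finset.univ.powerset.filter
      (fun I : Finset (Fin n) => I ≠ ∅ ∧ I ≠ Finset.univ ∧ k ∉ I)
      = T.powerset.filter (· ≠ ∅) := by
    ext I
    simp only [Finset.mem_filter, Finset.mem_powerset, hT, Finset.subset_erase, ne_eq]
    constructor
    · rintro ⟨h1, h2, h3, h4⟩
      exact ⟨⟨h1, h4⟩, h2⟩
    · rintro ⟨⟨h1, h4⟩, h2⟩
      refine ⟨h1, h2, ?_, h4⟩
      rintro rfl
      exact h4 (Finset.mem_univ k)
  rw [hfilter]
  calc ∑ I ∈ T.powerset.filter (· ≠ ∅),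
        ((Nat.choose (I.card - 1) (i' + 1 - 1) : ℕ) : R) *
          (∑ j ∈ I, X j) ^ (I.card - (i' + 1)) *
          ((∑ j, X j) - ∑ j ∈ I, X j) ^ (n - I.card - 1)
      = ∑ I ∈ T.powerset.filter (· ≠ ∅),
          (Polynomial.X * (Polynomial.X + ∑ j ∈ I, Polynomial.C (X j : R)) ^ (I.card - 1) *
            (Polynomial.C (X k : R) + ∑ j ∈ T \ I, Polynomial.C (X j)) ^ (T.card - I.card)).coeff
            (i' + 1) := by
        apply Finset.sum_congr rfl
        intro I hI
        simp only [Finset.mem_filter, Finset.mem_powerset, ne_eq] at hI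
        have hIsub : I ⊆ T := hI.1
        have hIcard : 1 ≤ I.card := Finset.card_pos.mpr (Finset.nonempty_iff_ne_empty.mpr hI.2)
        have hIle : I.card ≤ T.card := Finset.card_le_card hIsub
        have h1 : (∑ j ∈ I, (Polynomial.C (X j : R))) = Polynomial.C (∑ j ∈ I, (X j : R)) :=
          (map_sum Polynomial.C _ I).symm
        have hCdiff : (Polynomial.C (X k : R) + ∑ j ∈ T \ I, Polynomial.C (X j))
            = Polynomial.C ((∑ j, X j) - ∑ j ∈ I, (X j : R)) := by
          rw [← map_sum, ← map_add]
          congr 1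
          have h2 : (∑ j ∈ T \ I, (X j : R)) = (∑ j ∈ T, X j) - ∑ j ∈ I, X j := by
            rw [eq_sub_iff_add_eq, Finset.sum_sdiff hIsub]
          rw [h2, ← hZT]
          ring
        rw [h1, hCdiff, ← Polynomial.C_pow]
        conv_rhs => rw [mul_assoc, Polynomial.coeff_X_mul, Polynomial.coeff_mul_C,
          Polynomial.coeff_X_add_C_pow]
        rw [show I.card - 1 - i' = I.card - (i' + 1) by omega]
        rw [show n - I.card - 1 = T.card - I.card by omega]
        rw [show i' + 1 - 1 = i' by omega]
        ring
    _ = ((Polynomial.X + Polynomial.C (X k : R) + ∑ j ∈ T, Polynomial.C (X j)) ^ T.card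
          - (Polynomial.C (X k : R) + ∑ j ∈ T, Polynomial.C (X j)) ^ T.card).coeff (i' + 1) := by
        rw [← Polynomial.finset_sum_coeff, key]
    _ = ((Nat.choose (n - 1) (i' + 1) : ℕ) : R) * (∑ j, X j) ^ (n - (i' + 1) - 1) := by
        have hsum : (∑ j ∈ T, Polynomial.C (X j : R)) = Polynomial.C (∑ j ∈ T, (X j : R)) :=
          (map_sum Polynomial.C _ T).symm
        rw [hsum]
        have hXC : (Polynomial.X + Polynomial.C (X k : R) + Polynomial.C (∑ j ∈ T, (X j : R)))
            = Polynomial.X + Polynomial.C (∑ j, (X j : R)) := by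
          rw [add_assoc, ← map_add, hZT]
        have hC2 : (Polynomial.C (X k : R) + Polynomial.C (∑ j ∈ T, (X j : R)))
            = Polynomial.C (∑ j, (X j : R)) := by
          rw [← map_add, hZT]
        rw [hXC, hC2, ← Polynomial.C_pow, Polynomial.coeff_sub, Polynomial.coeff_X_add_C_pow,
          Polynomial.coeff_C, if_neg (by omega : ¬(i' + 1 = 0)), sub_zero]
        rw [show T.card - (i' + 1) = n - (i' + 1) - 1 by omega]
        rw [show T.card = n - 1 from hTcard]
        ring
end
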